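/- arXiv:1708.00622 — 9 statements merged into one kernel-verified Lean document; each statement's English description precedes it below -/
import Mathlib

section
/- Let ℓ be a natural number and let T be a finite simple graph that is connected and satisfies |E(T)| ≤ |V(T)| − 1 + ℓ (i.e., T ∈ T_ℓ). Then the chromatic number χ(T) of T satisfies χ(T) ≤ 2·√ℓ + 2 (as real numbers). -/
/-!
If `T` is connected, at least `n - |S|` edges leave any nonempty vertex set `S` (grow `S` one
boundary edge at a time), so `S` spans at most `|S| - 1 + ℓ` edges. Put `r = ⌊√(2ℓ)⌋`. When
`|S| ≥ r + 3` this makes the average degree inside `S` smaller than `r + 2`, and when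
`|S| ≤ r + 2` every degree inside `S` is at most `r + 1`. So every vertex set contains a vertex
with at most `r + 1` neighbours in it, and greedy colouring along such vertices uses
`r + 2 ≤ 2√ℓ + 2` colours.
-/

open Finset

namespace SimpleGraph

variable {V : Type*} [Fintype V] [DecidableEq V] {G : SimpleGraph V} [DecidableRel G.Adj]

theorem card_edgeFinset_inter_sym2_add_card_compl_le (hG : G.Connected) {s : Finset V}
    (hs : s.Nonempty) : #(G.edgeFinset ∩ s.sym2) + #sᶜ ≤ #G.edgeFinset := by
  induction h : #sᶜ generalizing s with
  | zero => simpa using card_le_card inter_subset_left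
  | succ m ih =>
    obtain ⟨w, hw⟩ : sᶜ.Nonempty := card_pos.mp (by omega)
    obtain ⟨u, hu⟩ := hs
    obtain ⟨p⟩ := hG.preconnected u w
    obtain ⟨d, -, hd₁, hd₂⟩ := p.exists_boundary_dart (s : Set V) hu (mem_compl.mp hw)
    have hd₁ : d.fst ∈ s := hd₁
    have hd₂ : d.snd ∉ s := hd₂
    have hsub : G.edgeFinset ∩ s.sym2 ⊂ G.edgeFinset ∩ (insert d.snd s).sym2 := by
      refine ssubset_iff_of_subset (inter_subset_inter_left (sym2_mono (subset_insert _ _)))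
        |>.mpr ⟨d.edge, ?_, ?_⟩
      · simp [d.adj, Dart.edge, hd₁]
      · simp [Dart.edge, hd₂]
    have hgrown := ih (insert_nonempty d.snd s) <| by
      rw [compl_insert, card_erase_of_mem (mem_compl.mpr hd₂), h]; rfl
    have := card_lt_card hsub
    omega

theorem sum_card_neighborFinset_inter_eq (s : Finset V) :
    ∑ v ∈ s, #(G.neighborFinset v ∩ s) = 2 * #(G.edgeFinset ∩ s.sym2) := by
  rw [← filter_edgeFinset_toFinset_subset, card_filter_edgeFinset_toFinset_subset,
    ← sum_degrees_eq_twice_card_edges, ← sum_coe_sort s]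
  refine Fintype.sum_congr _ _ fun v => ?_
  have := congrArg card (G.map_neighborFinset_induce (s := (s : Set V)) v)
  rw [card_map, toFinset_coe] at this
  convert this.symm using 1
  convert (card_neighborFinset_eq_degree (G.induce (s : Set V)) v).symm

theorem exists_card_neighborFinset_inter_le_of_two_mul_lt {s : Finset V} {k : ℕ}
    (h : 2 * #(G.edgeFinset ∩ s.sym2) < (k + 1) * #s) :
    ∃ v ∈ s, #(G.neighborFinset v ∩ s) ≤ k := by
  rw [← sum_card_neighborFinset_inter_eq, mul_comm, ← smul_eq_mul, ← sum_const] at h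
  obtain ⟨v, hv, hlt⟩ := exists_lt_of_sum_lt h
  exact ⟨v, hv, Nat.le_of_lt_succ hlt⟩

theorem card_neighborFinset_inter_lt_card {s : Finset V} {v : V} (hv : v ∈ s) :
    #(G.neighborFinset v ∩ s) < #s :=
  card_lt_card ⟨inter_subset_right, fun h =>
    G.notMem_neighborFinset_self v (mem_inter.mp (h hv)).1⟩

theorem colorable_of_forall_exists_card_neighborFinset_inter_le {k : ℕ}
    (h : ∀ s : Finset V, s.Nonempty → ∃ v ∈ s, #(G.neighborFinset v ∩ s) ≤ k) :
    G.Colorable (k + 1) := by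
  suffices ∀ s : Finset V, ∃ C : V → Fin (k + 1), ∀ v ∈ s, ∀ w ∈ s, G.Adj v w → C v ≠ C w by
    obtain ⟨C, hC⟩ := this univ
    exact ⟨Coloring.mk C fun hvw => hC _ (mem_univ _) _ (mem_univ _) hvw⟩
  intro s
  induction s using Finset.strongInduction with
  | _ s ih =>
    rcases s.eq_empty_or_nonempty with rfl | hs
    · exact ⟨0, by simp⟩
    obtain ⟨v, hv, hdeg⟩ := h s hs
    obtain ⟨C, hC⟩ := ih (s.erase v) (erase_ssubset hv)
    obtain ⟨c, hc⟩ : ∃ c, c ∉ (G.neighborFinset v ∩ s).image C := by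
      by_contra! hall
      have := card_le_card (fun c _ => hall c : univ ⊆ _)
      grind [card_univ, Fintype.card_fin, card_image_le]
    refine ⟨Function.update C v c, fun x hx y hy hxy => ?_⟩
    simp only [Function.update_apply]
    split_ifs with hxv hyv hyv
    · exact absurd (hxv.trans hyv.symm) hxy.ne
    · subst hxv; grind [mem_neighborFinset]
    · subst hyv; grind [mem_neighborFinset, adj_comm]
    · exact hC x (mem_erase.mpr ⟨hxv, hx⟩) y (mem_erase.mpr ⟨hyv, hy⟩) hxy

theorem exists_card_neighborFinset_inter_le_sqrt (hG : G.Connected) {ℓ : ℕ}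
    (hE : #G.edgeFinset ≤ Fintype.card V - 1 + ℓ) {s : Finset V} (hs : s.Nonempty) :
    ∃ v ∈ s, #(G.neighborFinset v ∩ s) ≤ Nat.sqrt (2 * ℓ) + 1 := by
  set r := Nat.sqrt (2 * ℓ)
  obtain ⟨u, hu⟩ := hs
  by_cases hsmall : #s ≤ r + 2
  · exact ⟨u, hu, by have := G.card_neighborFinset_inter_lt_card hu; omega⟩
  apply exists_card_neighborFinset_inter_le_of_two_mul_lt
  have hinner : #(G.edgeFinset ∩ s.sym2) + 1 ≤ #s + ℓ := by
    have hcross := card_edgeFinset_inter_sym2_add_card_compl_le hG ⟨u, hu⟩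
    have := card_le_univ s
    rw [card_compl] at hcross
    omega
  have hr : 2 * ℓ < (r + 1) * (r + 1) := Nat.lt_succ_sqrt (2 * ℓ)
  nlinarith

end SimpleGraph

open SimpleGraph

/-- If `T` is a finite simple connected graph with `|E(T)| ≤ |V(T)| - 1 + ℓ`
(i.e. `T ∈ 𝕋_ℓ`), then its chromatic number is at most `2√ℓ + 2` (as real numbers). -/
theorem chromaticNumber_le_of_mem_Tl {V : Type} [Fintype V] (T : SimpleGraph V) (ℓ : ℕ)
    (hconn : T.Connected) (hedges : T.edgeSet.ncard ≤ Fintype.card V - 1 + ℓ)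
    (χ : ℕ) (hχ : T.chromaticNumber = (χ : ℕ∞)) :
    (χ : ℝ) ≤ 2 * Real.sqrt (ℓ : ℝ) + 2 := by
  classical
  have hE : #T.edgeFinset ≤ Fintype.card V - 1 + ℓ := by
    rwa [← Set.ncard_coe_finset, coe_edgeFinset]
  have hcol : T.Colorable (Nat.sqrt (2 * ℓ) + 1 + 1) :=
    colorable_of_forall_exists_card_neighborFinset_inter_le fun _ hs =>
      exists_card_neighborFinset_inter_le_sqrt hconn hE hs
  have hχle : χ ≤ Nat.sqrt (2 * ℓ) + 2 := by
    exact_mod_cast hχ ▸ hcol.chromaticNumber_le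
  calc (χ : ℝ) ≤ Nat.sqrt (2 * ℓ) + 2 := by exact_mod_cast hχle
    _ ≤ √(2 * ℓ) + 2 := by
        gcongr
        exact_mod_cast Real.nat_sqrt_le_real_sqrt
    _ = √2 * √ℓ + 2 := by rw [Real.sqrt_mul zero_le_two]
    _ ≤ 2 * √ℓ + 2 := by
        gcongr
        linarith [Real.sqrt_two_lt_three_halves]
end

section
/- Let ℓ be a natural number and let T be a finite simple graph that is connected and satisfies |E(T)| ≤ |V(T)| − 1 + ℓ (i.e., T ∈ T_ℓ). Let v ∈ V(T) and let N₁, N₂ be a partition of the neighborhood N_T(v) into two (possibly empty) disjoint sets. Let T′ be the graph with vertex set (V(T) \ {v}) ∪ {v₁, v₂} (where v₁, v₂ are two new vertices) and edge set E(T − v) ∪ { v₁u : u ∈ N₁ } ∪ { v₂u : u ∈ N₂ } ∪ { v₁v₂ }. Then T′ is connected and |E(T′)| ≤ |V(T′)| − 1 + ℓ, i.e., T′ ∈ T_ℓ. -/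
/-- The graph `T'` obtained from `T` by splitting the vertex `v` into two adjacent
vertices `v₁ = Sum.inr false` and `v₂ = Sum.inr true`, where `v₁` gets the neighbours
in `N₁` and `v₂` gets the neighbours in `N₂`.  The remaining vertices
`Sum.inl u` (with `u ≠ v`) keep the adjacencies of `T - v`. -/
def splitVertex {V : Type} (T : SimpleGraph V) (v : V) (N₁ N₂ : Set V) :
    SimpleGraph ({u : V // u ≠ v} ⊕ Bool) :=
  SimpleGraph.fromRel (fun a b =>
    match a, b with
    | Sum.inl u, Sum.inl w => T.Adj u.1 w.1
    | Sum.inl u, Sum.inr false => u.1 ∈ N₁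
    | Sum.inl u, Sum.inr true => u.1 ∈ N₂
    | Sum.inr false, Sum.inr true => True
    | _, _ => False)

variable {V : Type} {T : SimpleGraph V} {v : V} {N₁ N₂ : Set V}

lemma adj_inl_inl {u w : {u : V // u ≠ v}} :
    (splitVertex T v N₁ N₂).Adj (Sum.inl u) (Sum.inl w) ↔ T.Adj u.1 w.1 := by
  simp only [splitVertex, SimpleGraph.fromRel_adj]
  constructor
  · rintro ⟨-, h | h⟩
    · exact h
    · exact h.symm
  · intro h
    exact ⟨fun e => h.ne (congrArg Subtype.val (Sum.inl.inj e)), Or.inl h⟩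

lemma adj_inl_inr {u : {u : V // u ≠ v}} {b : Bool} :
    (splitVertex T v N₁ N₂).Adj (Sum.inl u) (Sum.inr b) ↔
      (if b then u.1 ∈ N₂ else u.1 ∈ N₁) := by
  cases b <;> simp [splitVertex, SimpleGraph.fromRel_adj]

lemma adj_inr_inr {x y : Bool} :
    (splitVertex T v N₁ N₂).Adj (Sum.inr x) (Sum.inr y) ↔ x ≠ y := by
  cases x <;> cases y <;> simp [splitVertex, SimpleGraph.fromRel_adj]

lemma reach_step (hunion : N₁ ∪ N₂ = T.neighborSet v)
    (f : V → ({u : V // u ≠ v} ⊕ Bool))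
    (hfv : f v = Sum.inr false)
    (hfu : ∀ u (h : u ≠ v), f u = Sum.inl ⟨u, h⟩)
    {u w : V} (h : T.Adj u w) :
    (splitVertex T v N₁ N₂).Reachable (f u) (f w) := by
  have key : ∀ u : V, T.Adj u v →
      (splitVertex T v N₁ N₂).Reachable (f u) (Sum.inr false) := by
    intro u h
    have hu : u ≠ v := h.ne
    have hmem : u ∈ N₁ ∪ N₂ := by rw [hunion]; exact h.symm
    rw [hfu u hu]
    rcases hmem with hm | hm
    · exact (adj_inl_inr.2 (by simpa using hm)).reachable
    · exact ((adj_inl_inr (b := true)).2 (by simpa using hm)).reachable.trans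
        ((adj_inr_inr (x := true) (y := false)).2 (by simp)).reachable
  by_cases hu : u = v
  · subst hu
    rw [hfv]
    exact (key w h.symm).symm
  · by_cases hw : w = v
    · subst hw
      rw [hfv]
      exact key u h
    · rw [hfu u hu, hfu w hw]
      exact (adj_inl_inl.2 h).reachable

lemma split_connected (hconn : T.Connected) (hunion : N₁ ∪ N₂ = T.neighborSet v) :
    (splitVertex T v N₁ N₂).Connected := by
  classical
  set f : V → ({u : V // u ≠ v} ⊕ Bool) :=
    fun u => if h : u = v then Sum.inr false else Sum.inl ⟨u, h⟩ with hf
  have hfv : f v = Sum.inr false := by simp [hf]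
  have hfu : ∀ u (h : u ≠ v), f u = Sum.inl ⟨u, h⟩ := by
    intro u h; simp [hf, h]
  have step : ∀ {u w : V}, T.Adj u w →
      (splitVertex T v N₁ N₂).Reachable (f u) (f w) :=
    fun h => reach_step hunion f hfv hfu h
  have reach : ∀ u w : V, T.Reachable u w →
      (splitVertex T v N₁ N₂).Reachable (f u) (f w) := by
    intro u w h
    obtain ⟨p⟩ := h
    induction p with
    | nil => exact SimpleGraph.Reachable.refl _
    | cons h _ ih => exact (step h).trans ih
  have base : ∀ a, (splitVertex T v N₁ N₂).Reachable a (Sum.inr false) := by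
    intro a
    match a with
    | Sum.inr false => exact SimpleGraph.Reachable.refl _
    | Sum.inr true => exact ((adj_inr_inr (x := true) (y := false)).2 (by simp)).reachable
    | Sum.inl u =>
      have := reach u.1 v (hconn.preconnected u.1 v)
      rwa [hfv, hfu u.1 u.2] at this
  haveI : Nonempty ({u : V // u ≠ v} ⊕ Bool) := ⟨Sum.inr false⟩
  exact ⟨fun a b => (base a).trans (base b).symm⟩

def pm {V : Type} (v : V) : ({u : V // u ≠ v} ⊕ Bool) → V :=
  Sum.elim Subtype.val (fun _ => v)

lemma pm_eq {a c : ({u : V // u ≠ v} ⊕ Bool)} (h : pm v a = pm v c) :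
    a = c ∨ ∃ x : Bool, a = Sum.inr x ∧ c = Sum.inr (!x) := by
  rcases a with u | x <;> rcases c with w | y
  · exact Or.inl (by simp [pm] at h; exact congrArg Sum.inl (Subtype.ext h))
  · exact absurd h u.2
  · exact absurd h.symm w.2
  · by_cases hxy : x = y
    · exact Or.inl (by rw [hxy])
    · exact Or.inr ⟨x, rfl, by rcases x <;> rcases y <;> simp_all⟩

lemma nodbl (hdisj : Disjoint N₁ N₂) (a : {u : V // u ≠ v} ⊕ Bool) (y : Bool)
    (h1 : (splitVertex T v N₁ N₂).Adj a (Sum.inr y))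
    (h2 : (splitVertex T v N₁ N₂).Adj a (Sum.inr (!y))) : False := by
  rcases a with u | x
  · rw [adj_inl_inr] at h1 h2
    rcases y
    · exact Set.disjoint_left.mp hdisj (by simpa using h1) (by simpa using h2)
    · exact Set.disjoint_left.mp hdisj (by simpa using h2) (by simpa using h1)
  · rw [adj_inr_inr] at h1 h2
    rcases x <;> rcases y <;> simp_all

lemma aux_align (hdisj : Disjoint N₁ N₂) {a b c d : ({u : V // u ≠ v} ⊕ Bool)}
    (hab : (splitVertex T v N₁ N₂).Adj a b) (hcd : (splitVertex T v N₁ N₂).Adj c d)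
    (h1 : pm v a = pm v c) (h2 : pm v b = pm v d) : s(a, b) = s(c, d) := by
  rcases pm_eq h1 with rfl | ⟨x, rfl, rfl⟩
  · rcases pm_eq h2 with rfl | ⟨y, rfl, rfl⟩
    · rfl
    · exact (nodbl hdisj a y hab hcd).elim
  · rcases pm_eq h2 with rfl | ⟨y, rfl, rfl⟩
    · exact (nodbl hdisj b x hab.symm hcd.symm).elim
    · have hxy : x ≠ y := adj_inr_inr.1 hab
      have : y = !x := by rcases x <;> rcases y <;> simp_all
      rw [this, Bool.not_not]
      exact Sym2.eq_swap

lemma edge_count (hunion : N₁ ∪ N₂ = T.neighborSet v) (hdisj : Disjoint N₁ N₂)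
    [Finite V] :
    (splitVertex T v N₁ N₂).edgeSet.ncard ≤ T.edgeSet.ncard + 1 := by
  classical
  have hmaps : ∀ e ∈ (splitVertex T v N₁ N₂).edgeSet,
      Sym2.map (pm v) e ∈ T.edgeSet ∪ {s(v, v)} := by
    intro e he
    induction e using Sym2.ind with
    | _ a b =>
      rw [SimpleGraph.mem_edgeSet] at he
      rw [Sym2.map_pair_eq]
      have memN : ∀ u : {u : V // u ≠ v}, u.1 ∈ N₁ ∪ N₂ → T.Adj u.1 v := by
        intro u hu
        rw [hunion] at hu
        exact hu.symm
      rcases a with u | x <;> rcases b with w | y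
      · exact Or.inl (adj_inl_inl.1 he)
      · rw [adj_inl_inr] at he
        refine Or.inl ?_
        show T.Adj u.1 (pm v (Sum.inr y))
        refine memN u ?_
        rcases y
        · exact Or.inl he
        · exact Or.inr he
      · rw [(splitVertex T v N₁ N₂).adj_comm, adj_inl_inr] at he
        refine Or.inl ?_
        show T.Adj (pm v (Sum.inr x)) w.1
        refine (memN w ?_).symm
        rcases x
        · exact Or.inl he
        · exact Or.inr he
      · exact Or.inr rfl
  have hinj : Set.InjOn (Sym2.map (pm v)) (splitVertex T v N₁ N₂).edgeSet := by
    intro e1 he1 e2 he2 h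
    revert he1 he2 h
    refine Sym2.inductionOn₂ e1 e2 ?_
    intro a b c d he1 he2 h
    rw [SimpleGraph.mem_edgeSet] at he1 he2
    rw [Sym2.map_pair_eq, Sym2.map_pair_eq, Sym2.eq_iff] at h
    rcases h with ⟨h1, h2⟩ | ⟨h1, h2⟩
    · exact aux_align hdisj he1 he2 h1 h2
    · exact (aux_align hdisj he1 he2.symm h1 h2).trans Sym2.eq_swap
  calc (splitVertex T v N₁ N₂).edgeSet.ncard
      ≤ (T.edgeSet ∪ {s(v, v)}).ncard :=
        Set.ncard_le_ncard_of_injOn _ hmaps hinj (Set.toFinite _)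
    _ ≤ T.edgeSet.ncard + ({s(v, v)} : Set (Sym2 V)).ncard := Set.ncard_union_le _ _
    _ = T.edgeSet.ncard + 1 := by rw [Set.ncard_singleton]


/-- Splitting a vertex of a graph `T ∈ 𝕋_ℓ` (i.e. `T` connected with
`|E(T)| ≤ |V(T)| - 1 + ℓ`) along a partition `N₁, N₂` of its neighbourhood yields
a graph that is again in `𝕋_ℓ`. -/
theorem splitVertex_mem_Tl {V : Type} [Fintype V] (T : SimpleGraph V) (ℓ : ℕ)
    (hconn : T.Connected) (hedges : T.edgeSet.ncard ≤ Fintype.card V - 1 + ℓ)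
    (v : V) (N₁ N₂ : Set V)
    (hunion : N₁ ∪ N₂ = T.neighborSet v) (hdisj : Disjoint N₁ N₂) :
    (splitVertex T v N₁ N₂).Connected ∧
      (splitVertex T v N₁ N₂).edgeSet.ncard ≤
        Nat.card ({u : V // u ≠ v} ⊕ Bool) - 1 + ℓ := by
  classical
  refine ⟨split_connected hconn hunion, ?_⟩
  have hV : 1 ≤ Fintype.card V := Fintype.card_pos_iff.2 hconn.nonempty
  have hcardsub : Fintype.card {u : V // u ≠ v} = Fintype.card V - 1 := by
    have := Fintype.card_subtype_compl (fun u : V => u = v)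
    simp only [Fintype.card_subtype_eq] at this
    exact this
  have hcard : Nat.card ({u : V // u ≠ v} ⊕ Bool) = Fintype.card V + 1 := by
    rw [Nat.card_eq_fintype_card, Fintype.card_sum, hcardsub, Fintype.card_bool]
    omega
  have h1 := edge_count (T := T) hunion hdisj
  rw [hcard]
  omega
end

section
/- Let G be a finite simple graph that is 2-connected, i.e., G is connected, |V(G)| ≥ 3, and G − v is connected for every vertex v ∈ V(G). Let T be a finite simple graph, let φ be a T-witness structure of G, and let t be a cut vertex of T, i.e., T is connected and T − t is disconnected. Then |φ⁻¹(t)| ≥ 2. -/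
/-- `φ` is a `T`-witness structure of `G`: a surjective map such that every witness set
`W(t) = φ⁻¹(t)` induces a connected subgraph of `G`, and distinct `t, t'` are adjacent in `T`
iff there is an edge of `G` between the corresponding witness sets. -/
def IsWitnessStructure {V W : Type} (G : SimpleGraph V) (T : SimpleGraph W) (φ : V → W) : Prop :=
  Function.Surjective φ ∧
  (∀ t : W, (G.induce {v | φ v = t}).Connected) ∧
  (∀ t t' : W, t ≠ t' → (T.Adj t t' ↔ ∃ u u' : V, φ u = t ∧ φ u' = t' ∧ G.Adj u u'))

/-- If `G` is 2-connected (connected, at least 3 vertices, and removing any vertex keeps it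
connected), `φ` is a `T`-witness structure of `G`, and `t` is a cut vertex of `T`
(`T` connected, `T - t` disconnected), then the witness set of `t` has at least 2 vertices. -/
theorem witness_of_cut_vertex_is_big {V W : Type} [Fintype V] [Fintype W]
    (G : SimpleGraph V) (T : SimpleGraph W) (φ : V → W)
    (hconn : G.Connected) (hcard : 3 ≤ Fintype.card V)
    (h2conn : ∀ v : V, (G.induce {u | u ≠ v}).Connected)
    (hφ : IsWitnessStructure G T φ)
    (t : W) (hTconn : T.Connected) (hcut : ¬ (T.induce {s | s ≠ t}).Connected) :
    2 ≤ {v : V | φ v = t}.ncard := by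
  by_contra h
  push_neg at h
  obtain ⟨v, hv⟩ := hφ.1 t
  -- the witness set is exactly {v}
  have hS : {x : V | φ x = t} = {v} := by
    have h1 : ({v} : Set V) ⊆ {x : V | φ x = t} := by
      intro x hx; rcases hx with rfl; exact hv
    have hfin : ({x : V | φ x = t}).Finite := Set.toFinite _
    have : ({v} : Set V).ncard ≤ {x : V | φ x = t}.ncard :=
      Set.ncard_le_ncard h1 hfin
    rw [Set.ncard_singleton] at this
    have hle : {x : V | φ x = t}.ncard ≤ 1 := by omega
    exact (Set.eq_of_subset_of_ncard_le h1 (by rw [Set.ncard_singleton]; exact hle) hfin).symm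
  have huniq : ∀ x : V, φ x = t → x = v := by
    intro x hx
    have : x ∈ ({v} : Set V) := hS ▸ hx
    exact this
  have hne : ∀ x : {x : V // x ≠ v}, φ x.1 ≠ t := fun x hx => x.2 (huniq _ hx)
  -- transfer walks in G - v to reachability in T - t
  have key : ∀ (a b : {x : V // x ≠ v}) (p : (G.induce {x | x ≠ v}).Walk a b),
      (T.induce {s | s ≠ t}).Reachable ⟨φ a.1, hne a⟩ ⟨φ b.1, hne b⟩ := by
    intro a b p
    induction p with
    | nil => exact SimpleGraph.Reachable.refl _
    | @cons a c b hadj p ih =>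
      by_cases hac : φ a.1 = φ c.1
      · have : (⟨φ a.1, hne a⟩ : {s : W // s ≠ t}) = ⟨φ c.1, hne c⟩ := Subtype.ext hac
        rw [this]; exact ih
      · have hT : T.Adj (φ a.1) (φ c.1) :=
          (hφ.2.2 _ _ hac).mpr ⟨a.1, c.1, rfl, rfl, hadj⟩
        exact (SimpleGraph.Adj.reachable (by exact hT :
          (T.induce {s | s ≠ t}).Adj ⟨φ a.1, hne a⟩ ⟨φ c.1, hne c⟩)).trans ih
  apply hcut
  -- T - t is nonempty
  obtain ⟨u, hu⟩ := Fintype.exists_ne_of_one_lt_card (by omega) v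
  have huφ : φ u ≠ t := fun hx => hu (huniq _ hx)
  rw [SimpleGraph.connected_iff]
  constructor
  · intro ⟨s, hs⟩ ⟨s', hs'⟩
    obtain ⟨u₁, hu₁⟩ := hφ.1 s
    obtain ⟨u₂, hu₂⟩ := hφ.1 s'
    have hu₁v : u₁ ≠ v := fun h => hs (by rw [← hu₁, h, hv])
    have hu₂v : u₂ ≠ v := fun h => hs' (by rw [← hu₂, h, hv])
    obtain ⟨p⟩ := (h2conn v).preconnected ⟨u₁, hu₁v⟩ ⟨u₂, hu₂v⟩
    have := key ⟨u₁, hu₁v⟩ ⟨u₂, hu₂v⟩ p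
    have e1 : (⟨s, hs⟩ : {s : W // s ≠ t}) = ⟨φ u₁, hne ⟨u₁, hu₁v⟩⟩ := Subtype.ext hu₁.symm
    have e2 : (⟨s', hs'⟩ : {s : W // s ≠ t}) = ⟨φ u₂, hne ⟨u₂, hu₂v⟩⟩ := Subtype.ext hu₂.symm
    rw [e1, e2]
    exact this
  · exact ⟨⟨φ u, huφ⟩⟩
end

section
/- Let k, ℓ be natural numbers, let T be a finite simple graph that is connected with |E(T)| ≤ |V(T)| − 1 + ℓ (i.e., T ∈ T_ℓ), let G be a finite simple graph, and let φ be a T-witness structure of G with Σ_{t ∈ V(T)} (|φ⁻¹(t)| − 1) ≤ k (so G is k-contractible to T via φ). Let X, U ⊆ V(G) be such that U is an independent set in G, every vertex v ∈ U satisfies X ⊆ N_G(v), and |U| ≥ k + ℓ + 2. Then there exists a vertex t ∈ V(T) such that X ⊆ φ⁻¹(t). -/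
namespace SimpleGraph

variable {W : Type*} {T : SimpleGraph W}

lemma Connected.of_forall_adj_reachable {T' : SimpleGraph W} (h : T.Connected)
    (hT' : ∀ ⦃x y⦄, T.Adj x y → T'.Reachable x y) : T'.Connected := by
  have : Nonempty W := h.nonempty
  refine ⟨fun x y => ?_⟩
  obtain ⟨p⟩ := h x y
  induction p with
  | nil => rfl
  | cons hxy _ ih => exact (hT' hxy).trans ih

lemma card_add_ncard_le_of_connected_deleteEdges [Finite W] {D : Set (Sym2 W)}
    (hD : D ⊆ T.edgeSet) (h : (T.deleteEdges D).Connected) :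
    Nat.card W + D.ncard ≤ T.edgeSet.ncard + 1 := by
  have hcard := h.card_vert_le_card_edgeSet_add_one
  rw [Nat.card_coe_set_eq, edgeSet_deleteEdges, Set.ncard_sdiff hD] at hcard
  have := Set.ncard_le_ncard hD
  omega

lemma Connected.card_add_ncard_commonNeighbors_le [Finite W] (h : T.Connected) {a b : W}
    (hab : a ≠ b) : Nat.card W + (T.commonNeighbors a b).ncard ≤ T.edgeSet.ncard + 2 := by
  set S := T.commonNeighbors a b
  obtain hS | ⟨t₀, ht₀⟩ := S.eq_empty_or_nonempty
  · have := h.card_vert_le_card_edgeSet_add_one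
    simp only [hS, Set.ncard_empty, Nat.card_coe_set_eq] at this ⊢
    omega
  set D := (fun t => s(t, b)) '' (S \ {t₀})
  have hD : D ⊆ T.edgeSet := by
    rintro _ ⟨t, ⟨ht, -⟩, rfl⟩
    exact (T.mem_commonNeighbors.1 ht).2.symm
  have hDcard : D.ncard = S.ncard - 1 := by
    rw [Set.ncard_image_of_injective _ fun _ _ => Sym2.congr_left.1,
      Set.ncard_sdiff_singleton_of_mem ht₀]
  have hadj_a : ∀ t ∈ S, (T.deleteEdges D).Adj t a := by
    intro t ht
    refine deleteEdges_adj.2 ⟨(T.mem_commonNeighbors.1 ht).1.symm, ?_⟩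
    rintro ⟨t', ⟨ht', -⟩, he⟩
    rcases Sym2.eq_iff.1 he with ⟨-, hba⟩ | ⟨hta, -⟩
    · exact hab hba.symm
    · exact (T.mem_commonNeighbors.1 ht').1.ne hta.symm
  have hadj_b : (T.deleteEdges D).Adj t₀ b := by
    refine deleteEdges_adj.2 ⟨(T.mem_commonNeighbors.1 ht₀).2.symm, ?_⟩
    rintro ⟨t', ⟨ht', hne⟩, he⟩
    rcases Sym2.eq_iff.1 he with ⟨ht₀', -⟩ | ⟨htb, -⟩
    · exact hne ht₀'
    · exact (T.mem_commonNeighbors.1 ht').2.ne htb.symm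
  have hconn : (T.deleteEdges D).Connected := by
    refine h.of_forall_adj_reachable fun x y hxy => ?_
    by_cases hxyD : s(x, y) ∈ D
    · obtain ⟨t, ⟨ht, -⟩, he⟩ := hxyD
      have hreach : (T.deleteEdges D).Reachable t b :=
        (hadj_a t ht).reachable.trans ((hadj_a t₀ ht₀).reachable.symm.trans hadj_b.reachable)
      rcases Sym2.eq_iff.1 he with ⟨rfl, rfl⟩ | ⟨rfl, rfl⟩
      · exact hreach
      · exact hreach.symm
    · exact (deleteEdges_adj.2 ⟨hxy, hxyD⟩).reachable
  have := card_add_ncard_le_of_connected_deleteEdges hD hconn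
  have := (Set.ncard_pos).2 ⟨t₀, ht₀⟩
  omega

end SimpleGraph

namespace Set

variable {V W : Type*}

open Classical in
lemma ncard_inter_fiber_le [Finite V] (φ : V → W) {U : Set V} {A : Set W}
    (hA : ∀ t ∈ A, ∃ x ∉ U, φ x = t) (t : W) :
    (U ∩ {v | φ v = t}).ncard ≤ {v | φ v = t}.ncard - 1 + if t ∈ φ '' U \ A then 1 else 0 := by
  split_ifs with ht
  · have := ncard_le_ncard (inter_subset_right (s := U) (t := {v | φ v = t}))
    omega
  by_cases htA : t ∈ A
  · obtain ⟨x, hxU, rfl⟩ := hA t htA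
    have : (U ∩ {v | φ v = φ x}).ncard < {v | φ v = φ x}.ncard :=
      ncard_lt_ncard ⟨inter_subset_right, fun h => hxU (h rfl).1⟩
    omega
  · have hempty : U ∩ {v | φ v = t} = ∅ :=
      eq_empty_of_forall_notMem fun u ⟨hu, hut⟩ => ht ⟨⟨u, hu, hut⟩, htA⟩
    simp [hempty]

lemma ncard_eq_sum_ncard_inter_fiber [Fintype V] [Fintype W] (φ : V → W) (U : Set V) :
    U.ncard = ∑ t, (U ∩ {v | φ v = t}).ncard := by
  classical
  rw [ncard_eq_toFinset_card',
    Finset.card_eq_sum_card_fiberwise (f := φ) (t := Finset.univ) (by simp)]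
  refine Finset.sum_congr rfl fun t _ => ?_
  rw [ncard_eq_toFinset_card']
  congr 1
  ext
  simp

lemma ncard_le_sum_ncard_fiber_sub_one_add [Fintype V] [Fintype W] (φ : V → W) {U : Set V}
    {A : Set W} (hA : ∀ t ∈ A, ∃ x ∉ U, φ x = t) :
    U.ncard ≤ ∑ t, ({v | φ v = t}.ncard - 1) + (φ '' U \ A).ncard := by
  classical
  calc U.ncard = ∑ t, (U ∩ {v | φ v = t}).ncard := ncard_eq_sum_ncard_inter_fiber φ U
    _ ≤ ∑ t, ({v | φ v = t}.ncard - 1 + if t ∈ φ '' U \ A then 1 else 0) :=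
      Finset.sum_le_sum fun t _ => ncard_inter_fiber_le φ hA t
    _ = ∑ t, ({v | φ v = t}.ncard - 1) + (φ '' U \ A).ncard := by
      rw [Finset.sum_add_distrib, Finset.sum_boole, Nat.cast_id, ncard_eq_toFinset_card']
      congr 2
      ext
      simp
end Set

lemma IsWitnessStructure.adj_of_adj {V W : Type} {G : SimpleGraph V} {T : SimpleGraph W}
    {φ : V → W} (hφ : IsWitnessStructure G T φ) {u u' : V} (hne : φ u ≠ φ u')
    (h : G.Adj u u') : T.Adj (φ u) (φ u') :=
  (hφ.2.2 _ _ hne).2 ⟨u, u', rfl, rfl, h⟩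

theorem common_neighborhood_in_one_witness_set_general {V W : Type} [Fintype V] [Fintype W]
    (G : SimpleGraph V) (T : SimpleGraph W) (k ℓ : ℕ)
    (hTconn : T.Connected) (hTedges : T.edgeSet.ncard ≤ Fintype.card W - 1 + ℓ)
    (φ : V → W) (hφ : IsWitnessStructure G T φ)
    (hk : ∑ t : W, ({v : V | φ v = t}.ncard - 1) ≤ k)
    (X U : Set V)
    (hXnbr : ∀ v ∈ U, X ⊆ G.neighborSet v)
    (hU : k + ℓ + 2 ≤ U.ncard) :
    ∃ t : W, X ⊆ {v : V | φ v = t} := by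
  by_contra! hX
  have : Nonempty W := hTconn.nonempty
  obtain ⟨x₁, hx₁, -⟩ := Set.not_subset.1 (hX (Classical.arbitrary W))
  obtain ⟨x₂, hx₂, hne⟩ := Set.not_subset.1 (hX (φ x₁))
  have hXU : ∀ x ∈ X, x ∉ U := fun x hx hxU => (hXnbr x hxU hx).ne rfl
  have hcommon : φ '' U \ {φ x₁, φ x₂} ⊆ T.commonNeighbors (φ x₁) (φ x₂) := by
    rintro _ ⟨⟨u, hu, rfl⟩, hut⟩
    simp only [Set.mem_insert_iff, Set.mem_singleton_iff, not_or] at hut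
    exact ⟨hφ.adj_of_adj (Ne.symm hut.1) (hXnbr u hu hx₁).symm,
      hφ.adj_of_adj (Ne.symm hut.2) (hXnbr u hu hx₂).symm⟩
  have hfibers := Set.ncard_le_sum_ncard_fiber_sub_one_add φ (U := U) (A := {φ x₁, φ x₂}) <| by
    rintro t (rfl | rfl)
    exacts [⟨x₁, hXU x₁ hx₁, rfl⟩, ⟨x₂, hXU x₂ hx₂, rfl⟩]
  have hcycles := hTconn.card_add_ncard_commonNeighbors_le (Ne.symm hne)
  have := Set.ncard_le_ncard hcommon
  have := Fintype.card_pos (α := W)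
  rw [Nat.card_eq_fintype_card] at hcycles
  omega

/-- Let `G` be `k`-contractible to `T ∈ 𝕋_ℓ` via `φ`.  If `U` is an independent set of at
least `k + ℓ + 2` vertices of `G`, each of which has `X` in its neighbourhood, then `X` is
contained in a single witness set. -/
theorem common_neighborhood_in_one_witness_set {V W : Type} [Fintype V] [Fintype W]
    (G : SimpleGraph V) (T : SimpleGraph W) (k ℓ : ℕ)
    (hTconn : T.Connected) (hTedges : T.edgeSet.ncard ≤ Fintype.card W - 1 + ℓ)
    (φ : V → W) (hφ : IsWitnessStructure G T φ)
    (hk : ∑ t : W, ({v : V | φ v = t}.ncard - 1) ≤ k)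
    (X U : Set V)
    (hindep : ∀ u ∈ U, ∀ u' ∈ U, ¬ G.Adj u u')
    (hXnbr : ∀ v ∈ U, X ⊆ G.neighborSet v)
    (hU : k + ℓ + 2 ≤ U.ncard) :
    ∃ t : W, X ⊆ {v : V | φ v = t} :=
  common_neighborhood_in_one_witness_set_general G T k ℓ hTconn hTedges φ hφ hk X U hXnbr hU
end

section
/- Let G be a finite simple connected graph, let v be a cut vertex of G (i.e., G − v is disconnected), let C₁ be a connected component of G − v, let G₁ be the subgraph of G induced on V(C₁) ∪ {v}, and let G₂ be the subgraph of G induced on V(G) \ V(C₁). Let k₁, k₂, ℓ₁, ℓ₂ be natural numbers. If G₁ is k₁-contractible to some graph T₁ ∈ T_{ℓ₁} and G₂ is k₂-contractible to some graph T₂ ∈ T_{ℓ₂}, then G is (k₁ + k₂)-contractible to some graph T ∈ T_{ℓ₁ + ℓ₂}. -/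
/-- `G` is `k`-contractible to some graph `T ∈ 𝕋_ℓ`, i.e. to some connected graph `T`
with `|E(T)| ≤ |V(T)| - 1 + ℓ`, via a witness structure of total cost
`Σ_t (|W(t)| - 1) ≤ k`. -/
def IsKContractibleToTl {V : Type} (G : SimpleGraph V) (k ℓ : ℕ) : Prop :=
  ∃ (n : ℕ) (T : SimpleGraph (Fin n)) (φ : V → Fin n),
    IsWitnessStructure G T φ ∧
    (∑ t : Fin n, ({v : V | φ v = t}.ncard - 1)) ≤ k ∧
    T.Connected ∧ T.edgeSet.ncard ≤ n - 1 + ℓ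

/-!
Witness structures `φ₁` of `G[C ∪ {v}]` and `φ₂` of `G[V \ C]` glue along `v`: merge the two
witness sets containing `v` and keep all the others. As no edge joins `C` to `V \ (C ∪ {v})`,
every edge of the contracted graph `T` comes from an edge of `T₁` or of `T₂`, and `T` is the
one-point union of their vertex sets, so `|V(T)| = |V(T₁)| + |V(T₂)| - 1` and
`|E(T)| ≤ |E(T₁)| + |E(T₂)|`; `T` is connected as a contraction of the connected graph `G`.
Writing the cost of a witness structure as `|V(G)| - |V(T)|`, the costs add up because
`|C ∪ {v}| + |V \ C| = |V| + 1`.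
-/

open Function

namespace SimpleGraph

variable {V W : Type}

def contract (G : SimpleGraph V) (φ : V → W) : SimpleGraph W where
  Adj a b := a ≠ b ∧ ∃ u u', φ u = a ∧ φ u' = b ∧ G.Adj u u'
  symm := ⟨fun _ _ ⟨hne, u, u', hu, hu', h⟩ => ⟨hne.symm, u', u, hu', hu, h.symm⟩⟩
  loopless := ⟨fun _ h => h.1 rfl⟩

variable {G : SimpleGraph V} {φ : V → W}

@[simp]
lemma contract_adj {a b : W} :
    (G.contract φ).Adj a b ↔ a ≠ b ∧ ∃ u u', φ u = a ∧ φ u' = b ∧ G.Adj u u' :=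
  Iff.rfl

lemma Reachable.contract {u u' : V} (h : G.Reachable u u') :
    (G.contract φ).Reachable (φ u) (φ u') := by
  obtain ⟨p⟩ := h
  induction p with
  | nil => rfl
  | @cons x y _ hxy _ ih =>
    refine Reachable.trans ?_ ih
    by_cases hφ : φ x = φ y
    · rw [hφ]
    · exact (contract_adj.mpr ⟨hφ, x, y, rfl, rfl, hxy⟩).reachable

lemma Connected.contract (hG : G.Connected) (hφ : Surjective φ) : (G.contract φ).Connected := by
  have : Nonempty W := hG.nonempty.map φ
  refine ⟨fun a b => ?_⟩
  obtain ⟨u, rfl⟩ := hφ a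
  obtain ⟨u', rfl⟩ := hφ b
  exact (hG u u').contract

lemma connected_induce_image {S : Set V} {A : Set S} (h : ((G.induce S).induce A).Connected) :
    (G.induce (Subtype.val '' A)).Connected :=
  h.map ⟨fun x => ⟨x.1.1, x.1, x.2, rfl⟩, id⟩ (by rintro ⟨_, x, hx, rfl⟩; exact ⟨⟨x, hx⟩, rfl⟩)

lemma ConnectedComponent.mem_image_supp_of_adj {s : Set V} (C : (G.induce s).ConnectedComponent)
    {x y : V} (hx : x ∈ Subtype.val '' C.supp) (hy : y ∈ s) (hxy : G.Adj x y) :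
    y ∈ Subtype.val '' C.supp := by
  obtain ⟨x, hx, rfl⟩ := hx
  exact ⟨⟨y, hy⟩, C.mem_supp_of_adj_mem_supp hx hxy, rfl⟩

end SimpleGraph

open SimpleGraph

section Witness

variable {V W : Type} {G : SimpleGraph V} {φ : V → W}

lemma isWitnessStructure_contract (hφ : Surjective φ)
    (hW : ∀ t, (G.induce {v | φ v = t}).Connected) : IsWitnessStructure G (G.contract φ) φ :=
  ⟨hφ, hW, fun _ _ hne => contract_adj.trans (and_iff_right hne)⟩

lemma IsWitnessStructure.comp_iso {W' : Type} {T : SimpleGraph W} {T' : SimpleGraph W'}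
    (h : IsWitnessStructure G T φ) (e : T ≃g T') : IsWitnessStructure G T' (e ∘ φ) := by
  obtain ⟨hsurj, hconn, hadj⟩ := h
  refine ⟨e.surjective.comp hsurj, fun t => ?_, fun t t' hne => ?_⟩
  · obtain ⟨s, rfl⟩ := e.surjective t
    have hfiber : {v | (e ∘ φ) v = e s} = {v | φ v = s} := Set.ext fun _ => e.injective.eq_iff
    rw [hfiber]
    exact hconn s
  · obtain ⟨s, rfl⟩ := e.surjective t
    obtain ⟨s', rfl⟩ := e.surjective t'
    simpa only [e.map_adj_iff, comp_apply, EmbeddingLike.apply_eq_iff_eq] using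
      hadj s s' (ne_of_apply_ne e hne)

lemma IsWitnessStructure.mk_mem_image_edgeSet {W' : Type} {S : Set V} {T : SimpleGraph W'}
    {ψ : S → W'} (hψ : IsWitnessStructure (G.induce S) T ψ) {f : W' → W}
    (hf : ∀ y : S, φ y = f (ψ y)) {x y : S} (hxy : G.Adj x y) (hne : φ x ≠ φ y) :
    s(φ x, φ y) ∈ Sym2.map f '' T.edgeSet := by
  have hψne : ψ x ≠ ψ y := fun h => hne (by rw [hf, hf, h])
  refine ⟨s(ψ x, ψ y), (hψ.2.2 _ _ hψne).mpr ⟨x, y, rfl, rfl, hxy⟩, ?_⟩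
  rw [Sym2.map_mk, hf, hf]

lemma sum_ncard_fiber_sub_one_add_card [Finite V] [Fintype W] (hφ : Surjective φ) :
    ∑ t, ({v | φ v = t}.ncard - 1) + Nat.card W = Nat.card V := by
  have hpos : ∀ t, 1 ≤ {v | φ v = t}.ncard := fun t => (Set.ncard_pos).mpr (hφ t)
  calc ∑ t, ({v | φ v = t}.ncard - 1) + Nat.card W
      = ∑ t, ({v | φ v = t}.ncard - 1 + 1) := by
        rw [Finset.sum_add_distrib, Nat.card_eq_fintype_card]; simp
    _ = ∑ t, Nat.card {v // φ v = t} := by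
        refine Finset.sum_congr rfl fun t _ => ?_
        rw [Nat.sub_add_cancel (hpos t)]; rfl
    _ = Nat.card V := by rw [← Nat.card_sigma, Nat.card_congr (Equiv.sigmaFiberEquiv φ)]

end Witness

section Transfer

variable {V : Type} [Finite V] {G : SimpleGraph V} {k ℓ : ℕ}

lemma IsKContractibleToTl.exists_isWitnessStructure (h : IsKContractibleToTl G k ℓ) :
    ∃ (n : ℕ) (T : SimpleGraph (Fin n)) (φ : V → Fin n), IsWitnessStructure G T φ ∧
      Nat.card V ≤ n + k ∧ T.edgeSet.ncard + 1 ≤ n + ℓ := by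
  obtain ⟨n, T, φ, hφ, hk, hT, hℓ⟩ := h
  have hcost := sum_ncard_fiber_sub_one_add_card hφ.1
  have hn : 0 < n := Fin.pos_iff_nonempty.mpr hT.nonempty
  rw [Nat.card_fin] at hcost
  exact ⟨n, T, φ, hφ, by omega, by omega⟩

lemma IsKContractibleToTl.of_isWitnessStructure {W : Type} [Fintype W] {T : SimpleGraph W}
    {φ : V → W} (hφ : IsWitnessStructure G T φ) (hk : Nat.card V ≤ Nat.card W + k)
    (hT : T.Connected) (hℓ : T.edgeSet.ncard + 1 ≤ Nat.card W + ℓ) :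
    IsKContractibleToTl G k ℓ := by
  let e := T.overFinIso rfl
  have hcost := sum_ncard_fiber_sub_one_add_card (hφ.comp_iso e).1
  have hedges : (T.overFin rfl).edgeSet.ncard = T.edgeSet.ncard := by
    rw [← Nat.card_coe_set_eq, ← Nat.card_coe_set_eq, Nat.card_congr e.mapEdgeSet]
  rw [Nat.card_fin] at hcost
  rw [Nat.card_eq_fintype_card (α := W)] at hk hℓ
  exact ⟨_, _, e ∘ φ, hφ.comp_iso e, by omega, e.connected_iff.mp hT, by omega⟩

end Transfer

section Wedge

variable {W₁ W₂ : Type} (t₁ : W₁) (t₂ : W₂)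

open Classical in
/-- `W₁ ⊕ {t // t ≠ t₂}` is the one-point union of `W₁` and `W₂` along `t₁ = t₂`. -/
noncomputable def wedgeInr (t : W₂) : W₁ ⊕ {t // t ≠ t₂} :=
  if h : t = t₂ then .inl t₁ else .inr ⟨t, h⟩

variable {t₁ t₂}

lemma wedgeInr_self : wedgeInr t₁ t₂ t₂ = .inl t₁ := dif_pos rfl

@[simp]
lemma wedgeInr_eq_inl_iff {t : W₂} {s : W₁} : wedgeInr t₁ t₂ t = .inl s ↔ t = t₂ ∧ t₁ = s := by
  unfold wedgeInr
  split_ifs with h <;> simp [h]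

@[simp]
lemma wedgeInr_eq_inr_iff {t : W₂} {s : {t // t ≠ t₂}} : wedgeInr t₁ t₂ t = .inr s ↔ t = s := by
  unfold wedgeInr
  split_ifs with h
  · simpa [h] using s.2.symm
  · simp [Subtype.ext_iff]

variable (W₁ t₂)

lemma card_wedge [Finite W₁] [Finite W₂] :
    Nat.card (W₁ ⊕ {t // t ≠ t₂}) + 1 = Nat.card W₁ + Nat.card W₂ := by
  classical
  rw [Nat.card_sum, add_assoc, ← Finite.card_option, Nat.card_congr (Equiv.optionSubtypeNe t₂)]

end Wedge

section WedgeMap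

variable {V W₁ W₂ : Type} {G : SimpleGraph V} {C : Set V} {v : V}
  {φ₁ : ↥(C ∪ {v}) → W₁} {φ₂ : ↥Cᶜ → W₂} {t₁ : W₁} {t₂ : W₂}

variable (φ₁ φ₂ t₁ t₂) in
open Classical in
/-- Meant for `t₁ = φ₁ v` and `t₂ = φ₂ v`: the witness sets of `v` are merged, all others kept. -/
noncomputable def wedgeMap (x : V) : W₁ ⊕ {t // t ≠ t₂} :=
  if h : x ∈ C then .inl (φ₁ ⟨x, .inl h⟩) else wedgeInr t₁ t₂ (φ₂ ⟨x, h⟩)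

lemma wedgeMap_of_mem_compl (y : ↥Cᶜ) : wedgeMap φ₁ φ₂ t₁ t₂ y = wedgeInr t₁ t₂ (φ₂ y) :=
  dif_neg y.2

lemma wedgeMap_of_mem_union (hv : v ∉ C) (ht₁ : φ₁ ⟨v, .inr rfl⟩ = t₁) (ht₂ : φ₂ ⟨v, hv⟩ = t₂)
    (y : ↥(C ∪ {v})) : wedgeMap φ₁ φ₂ t₁ t₂ y = .inl (φ₁ y) := by
  obtain ⟨x, hx | rfl⟩ := y
  · exact dif_pos hx
  · rw [wedgeMap_of_mem_compl ⟨x, hv⟩, ht₂, ht₁, wedgeInr_self]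

variable (hv : v ∉ C) (ht₁ : φ₁ ⟨v, .inr rfl⟩ = t₁) (ht₂ : φ₂ ⟨v, hv⟩ = t₂)
include ht₁ ht₂

lemma setOf_wedgeMap_eq (w : W₁ ⊕ {t // t ≠ t₂}) :
    {x | wedgeMap φ₁ φ₂ t₁ t₂ x = w} =
      Subtype.val '' {y | .inl (φ₁ y) = w} ∪ Subtype.val '' {y | wedgeInr t₁ t₂ (φ₂ y) = w} := by
  ext x
  constructor
  · intro h
    by_cases hx : x ∈ C
    · exact .inl ⟨⟨x, .inl hx⟩, (wedgeMap_of_mem_union hv ht₁ ht₂ _).symm.trans h, rfl⟩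
    · exact .inr ⟨⟨x, hx⟩, (wedgeMap_of_mem_compl _).symm.trans h, rfl⟩
  · rintro (⟨y, hy, rfl⟩ | ⟨y, hy, rfl⟩)
    · exact (wedgeMap_of_mem_union hv ht₁ ht₂ y).trans hy
    · exact (wedgeMap_of_mem_compl y).trans hy

lemma connected_induce_setOf_wedgeMap_eq
    (h₁ : ∀ t, ((G.induce (C ∪ {v})).induce {y | φ₁ y = t}).Connected)
    (h₂ : ∀ t, ((G.induce Cᶜ).induce {y | φ₂ y = t}).Connected) (w : W₁ ⊕ {t // t ≠ t₂}) :
    (G.induce {x | wedgeMap φ₁ φ₂ t₁ t₂ x = w}).Connected := by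
  rw [setOf_wedgeMap_eq hv ht₁ ht₂]
  rcases w with s | s
  · by_cases hs : t₁ = s
    · subst hs
      convert induce_union_connected (connected_induce_image (h₁ t₁)).preconnected
        (connected_induce_image (h₂ t₂)).preconnected ⟨v, ⟨_, ht₁, rfl⟩, ⟨_, ht₂, rfl⟩⟩ using 4 <;>
        simp
    · convert connected_induce_image (h₁ s) using 4 <;> simp [hs]
  · convert connected_induce_image (h₂ s) using 4 <;> simp

lemma surjective_wedgeMap (h₁ : Surjective φ₁) (h₂ : Surjective φ₂) :
    Surjective (wedgeMap φ₁ φ₂ t₁ t₂) := by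
  rintro (s | s)
  · obtain ⟨y, rfl⟩ := h₁ s
    exact ⟨y, wedgeMap_of_mem_union hv ht₁ ht₂ y⟩
  · obtain ⟨y, hy⟩ := h₂ s
    exact ⟨y, by rw [wedgeMap_of_mem_compl, wedgeInr_eq_inr_iff, hy]⟩

variable {T₁ : SimpleGraph W₁} {T₂ : SimpleGraph W₂}

lemma edgeSet_contract_wedgeMap_subset (hC : ∀ x y, x ∈ C → G.Adj x y → y ∈ C ∪ {v})
    (h₁ : IsWitnessStructure (G.induce (C ∪ {v})) T₁ φ₁)
    (h₂ : IsWitnessStructure (G.induce Cᶜ) T₂ φ₂) :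
    (G.contract (wedgeMap φ₁ φ₂ t₁ t₂)).edgeSet ⊆
      Sym2.map .inl '' T₁.edgeSet ∪ Sym2.map (wedgeInr t₁ t₂) '' T₂.edgeSet := by
  intro e he
  induction e using Sym2.ind with | _ a b => ?_
  obtain ⟨hne, x, y, rfl, rfl, hxy⟩ := contract_adj.mp he
  have hφ₁ := wedgeMap_of_mem_union hv ht₁ ht₂
  by_cases hx : x ∈ C
  · exact .inl (h₁.mk_mem_image_edgeSet hφ₁ (x := ⟨x, .inl hx⟩) (y := ⟨y, hC x y hx hxy⟩) hxy hne)
  by_cases hy : y ∈ C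
  · exact .inl (h₁.mk_mem_image_edgeSet hφ₁ (x := ⟨x, hC y x hy hxy.symm⟩) (y := ⟨y, .inl hy⟩)
      hxy hne)
  · exact .inr (h₂.mk_mem_image_edgeSet wedgeMap_of_mem_compl (x := ⟨x, hx⟩) (y := ⟨y, hy⟩)
      hxy hne)

lemma ncard_edgeSet_contract_wedgeMap_le [Finite W₁] [Finite W₂]
    (hC : ∀ x y, x ∈ C → G.Adj x y → y ∈ C ∪ {v})
    (h₁ : IsWitnessStructure (G.induce (C ∪ {v})) T₁ φ₁)
    (h₂ : IsWitnessStructure (G.induce Cᶜ) T₂ φ₂) :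
    (G.contract (wedgeMap φ₁ φ₂ t₁ t₂)).edgeSet.ncard ≤ T₁.edgeSet.ncard + T₂.edgeSet.ncard := by
  let f₁ : Sym2 W₁ → Sym2 (W₁ ⊕ {t // t ≠ t₂}) := Sym2.map .inl
  let f₂ : Sym2 W₂ → Sym2 (W₁ ⊕ {t // t ≠ t₂}) := Sym2.map (wedgeInr t₁ t₂)
  calc _ ≤ (f₁ '' T₁.edgeSet ∪ f₂ '' T₂.edgeSet).ncard :=
        Set.ncard_le_ncard (edgeSet_contract_wedgeMap_subset hv ht₁ ht₂ hC h₁ h₂)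
    _ ≤ (f₁ '' T₁.edgeSet).ncard + (f₂ '' T₂.edgeSet).ncard := Set.ncard_union_le _ _
    _ ≤ T₁.edgeSet.ncard + T₂.edgeSet.ncard := add_le_add (Set.ncard_image_le) (Set.ncard_image_le)

end WedgeMap

theorem IsKContractibleToTl.glue {V : Type} [Finite V] {G : SimpleGraph V} {C : Set V} {v : V}
    {k₁ k₂ ℓ₁ ℓ₂ : ℕ} (hG : G.Connected) (hv : v ∉ C)
    (hC : ∀ x y, x ∈ C → G.Adj x y → y ∈ C ∪ {v})
    (h₁ : IsKContractibleToTl (G.induce (C ∪ {v})) k₁ ℓ₁)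
    (h₂ : IsKContractibleToTl (G.induce Cᶜ) k₂ ℓ₂) :
    IsKContractibleToTl G (k₁ + k₂) (ℓ₁ + ℓ₂) := by
  obtain ⟨n₁, T₁, φ₁, hw₁, hk₁, hℓ₁⟩ := h₁.exists_isWitnessStructure
  obtain ⟨n₂, T₂, φ₂, hw₂, hk₂, hℓ₂⟩ := h₂.exists_isWitnessStructure
  have hsurj := surjective_wedgeMap hv rfl rfl hw₁.1 hw₂.1
  have hW := isWitnessStructure_contract hsurj
    (connected_induce_setOf_wedgeMap_eq hv rfl rfl hw₁.2.1 hw₂.2.1)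
  have hE := ncard_edgeSet_contract_wedgeMap_le hv rfl rfl hC hw₁ hw₂
  have hcardW := card_wedge (Fin n₁) (φ₂ ⟨v, hv⟩)
  have hcardV : Nat.card ↥(C ∪ {v}) + Nat.card ↥Cᶜ = Nat.card V + 1 := by
    rw [Nat.card_coe_set_eq, Nat.card_coe_set_eq, Set.union_singleton,
      Set.ncard_insert_of_notMem hv, add_right_comm, Set.ncard_add_ncard_compl]
  simp only [Nat.card_fin] at hcardW
  exact .of_isWitnessStructure hW (by omega) (hG.contract hsurj) (by omega)

theorem contractible_glue_at_cut_vertex_general {V : Type} [Fintype V] (G : SimpleGraph V)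
    (hconn : G.Connected) (v : V)
    (C : (G.induce {u | u ≠ v}).ConnectedComponent)
    (k₁ k₂ ℓ₁ ℓ₂ : ℕ)
    (h₁ : IsKContractibleToTl (G.induce (Subtype.val '' C.supp ∪ {v})) k₁ ℓ₁)
    (h₂ : IsKContractibleToTl (G.induce (Subtype.val '' C.supp)ᶜ) k₂ ℓ₂) :
    IsKContractibleToTl G (k₁ + k₂) (ℓ₁ + ℓ₂) := by
  have hv : v ∉ Subtype.val '' C.supp := fun ⟨y, _, hy⟩ => y.2 hy
  refine h₁.glue hconn hv (fun x y hx hxy => ?_) h₂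
  by_cases hyv : y = v
  · exact .inr hyv
  · exact .inl (C.mem_image_supp_of_adj hx hyv hxy)

/-- Let `v` be a cut vertex of a connected graph `G`, let `C` be a connected component of
`G - v`, let `G₁` be induced on `V(C) ∪ {v}` and `G₂` induced on `V(G) \ V(C)`.  If `G₁` is
`k₁`-contractible to a graph in `𝕋_{ℓ₁}` and `G₂` is `k₂`-contractible to a graph in
`𝕋_{ℓ₂}`, then `G` is `(k₁ + k₂)`-contractible to a graph in `𝕋_{ℓ₁ + ℓ₂}`. -/
theorem contractible_glue_at_cut_vertex {V : Type} [Fintype V] (G : SimpleGraph V)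
    (hconn : G.Connected) (v : V)
    (hcut : ¬ (G.induce {u | u ≠ v}).Connected)
    (C : (G.induce {u | u ≠ v}).ConnectedComponent)
    (k₁ k₂ ℓ₁ ℓ₂ : ℕ)
    (h₁ : IsKContractibleToTl (G.induce (Subtype.val '' C.supp ∪ {v})) k₁ ℓ₁)
    (h₂ : IsKContractibleToTl (G.induce (Subtype.val '' C.supp)ᶜ) k₂ ℓ₂) :
    IsKContractibleToTl G (k₁ + k₂) (ℓ₁ + ℓ₂) :=
  contractible_glue_at_cut_vertex_general G hconn v C k₁ k₂ ℓ₁ ℓ₂ h₁ h₂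
end

section
/- For all natural numbers n, k, q with 1 ≤ k ≤ n and 1 ≤ q ≤ n, there exists a family F of functions from {1, …, n} to {1, …, q} with |F| ≤ C(n, q − 1) (the binomial coefficient n choose q−1) such that for every set S ⊆ {1, …, n} with |S| = k there is a function f ∈ F that splits S evenly, i.e., for all z, z′ ∈ {1, …, q}, the values |f⁻¹(z) ∩ S| and |f⁻¹(z′) ∩ S| differ by at most 1. -/
/-!
A set `B` of `q - 1` breakpoints colours `x` by the number of breakpoints `b ≤ x`; there are
`n choose (q - 1)` such colourings. Given a `k`-set `S`: if `k < q`, any `B ⊇ S` colours `S`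
injectively. Otherwise put the breakpoints at the elements of `S` of rank `⌈c k / q⌉`,
`0 < c < q`; the element of rank `j` then gets colour `⌊q j / k⌋`, and the class of colour `c`,
`{j | c k ≤ q j < c k + k}`, has `⌊k / q⌋` or `⌊k / q⌋ + 1` elements.
-/

open Finset

def SplitsEvenly {α β : Type*} [DecidableEq β] (f : α → β) (S : Finset α) : Prop :=
  ∀ z z', #{x ∈ S | f x = z} ≤ #{x ∈ S | f x = z'} + 1

lemma card_filter_map_univ {α β : Type*} [Fintype β] (ψ : β ↪ α) (p : α → Prop)
    [DecidablePred p] : #{a ∈ univ.map ψ | p a} = #{b | p (ψ b)} := by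
  rw [filter_map, card_map]
  rfl

section Arithmetic

variable {k q : ℕ}

lemma lt_ceilDiv_iff_mul_lt (hq : 0 < q) {b j : ℕ} : j < b ⌈/⌉ q ↔ q * j < b := by
  simpa using (ceilDiv_le_iff_le_mul hq (b := b) (c := j)).not

lemma ceilDiv_add_div_le_ceilDiv_add (hq : 0 < q) (b : ℕ) :
    b ⌈/⌉ q + k / q ≤ (b + k) ⌈/⌉ q := by
  simp only [Nat.ceilDiv_eq_add_pred_div]
  rw [show b + k + q - 1 = b + q - 1 + k by omega, Nat.add_div hq]
  omega

lemma ceilDiv_add_le_ceilDiv_add_div_add_one (hq : 0 < q) (b : ℕ) :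
    (b + k) ⌈/⌉ q ≤ b ⌈/⌉ q + k / q + 1 := by
  simp only [Nat.ceilDiv_eq_add_pred_div]
  rw [show b + k + q - 1 = b + q - 1 + k by omega, Nat.add_div hq]
  split <;> omega

lemma card_filter_mul_div_lt {c : ℕ} (hq : 0 < q) (hc : c ≤ q) :
    #{j : Fin k | q * j / k < c} = c * k ⌈/⌉ q := by
  have hcong : ∀ j : Fin k, q * j / k < c ↔ (j : ℕ) < c * k ⌈/⌉ q := fun j => by
    rw [Nat.div_lt_iff_lt_mul j.pos, lt_ceilDiv_iff_mul_lt hq]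
  rw [filter_congr fun j _ => hcong j, Fin.card_filter_val_lt, min_eq_right]
  exact (ceilDiv_le_iff_le_mul hq).2 (Nat.mul_le_mul_right k hc)

lemma card_filter_mul_div_eq {c : ℕ} (hq : 0 < q) (hc : c < q) :
    #{j : Fin k | q * j / k = c} = (c * k + k) ⌈/⌉ q - c * k ⌈/⌉ q := by
  have hsplit : #{j : Fin k | q * j / k < c + 1} =
      #{j : Fin k | q * j / k < c} + #{j : Fin k | q * j / k = c} := by
    rw [← card_union_of_disjoint (disjoint_filter.2 fun j _ h => h.ne), ← filter_or]
    exact congrArg card (filter_congr fun j _ => by omega)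
  rw [card_filter_mul_div_lt hq hc.le, card_filter_mul_div_lt (c := c + 1) hq hc, add_mul,
    one_mul] at hsplit
  omega

lemma card_filter_mul_div_eq_le {c c' : ℕ} (hc : c < q) (hc' : c' < q) :
    #{j : Fin k | q * j / k = c} ≤ #{j : Fin k | q * j / k = c'} + 1 := by
  have hq : 0 < q := by omega
  rw [card_filter_mul_div_eq hq hc, card_filter_mul_div_eq hq hc']
  have := ceilDiv_add_le_ceilDiv_add_div_add_one (k := k) hq (c * k)
  have := ceilDiv_add_div_le_ceilDiv_add (k := k) hq (c' * k)
  omega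

lemma exists_orderEmbedding_le_iff_lt_mul_div {m : ℕ} (hm : m < k) :
    ∃ t : Fin m ↪o Fin k, ∀ c j, t c ≤ j ↔ (c : ℕ) < (m + 1) * j / k := by
  have hq : 0 < m + 1 := m.succ_pos
  have hlt : ∀ c : Fin m, (c + 1) * k ⌈/⌉ (m + 1) < k := fun c => by
    suffices (c + 1) * k ⌈/⌉ (m + 1) ≤ k - 1 by omega
    obtain ⟨r, rfl⟩ : ∃ r, k = m + 1 + r := ⟨k - (m + 1), by omega⟩
    rw [ceilDiv_le_iff_le_mul hq, show m + 1 + r - 1 = m + r by omega]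
    have : (c : ℕ) + 1 ≤ m := c.2
    nlinarith
  have hmono : StrictMono fun c : Fin m => (⟨_, hlt c⟩ : Fin k) := fun c c' hcc' => by
    rw [Fin.mk_lt_mk]
    have hstep : ((c : ℕ) + 1) * k + k ≤ (c' + 1) * k := by
      have : (c : ℕ) + 1 + 1 ≤ c' + 1 := by simpa using hcc'
      nlinarith
    have := ceilDiv_add_div_le_ceilDiv_add (k := k) hq ((c + 1) * k)
    have := (gc_mul_ceilDiv hq).monotone_l hstep
    have : 1 ≤ k / (m + 1) := (Nat.one_le_div_iff hq).2 hm
    omega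
  refine ⟨OrderEmbedding.ofStrictMono (fun c => ⟨_, hlt c⟩) hmono, fun c j => ?_⟩
  rw [OrderEmbedding.coe_ofStrictMono, Fin.le_def, ceilDiv_le_iff_le_mul hq,
    Nat.lt_iff_add_one_le, Nat.le_div_iff_mul_le (by omega)]

end Arithmetic

def breakpointColouring {α : Type*} [LinearOrder α] (m : ℕ) (B : Finset α) (x : α) :
    Fin (m + 1) :=
  Fin.clamp #{b ∈ B | b ≤ x} m

section Breakpoints

variable {α : Type*} [LinearOrder α] {m : ℕ} {B : Finset α}

lemma breakpointColouring_val (hB : #B ≤ m) (x : α) :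
    (breakpointColouring m B x : ℕ) = #{b ∈ B | b ≤ x} :=
  min_eq_left ((card_filter_le _ _).trans hB)

lemma breakpointColouring_strictMonoOn (hB : #B ≤ m) :
    StrictMonoOn (breakpointColouring m B) B := fun x _ y hy hxy => by
  rw [Fin.lt_def, breakpointColouring_val hB, breakpointColouring_val hB]
  refine card_lt_card ((ssubset_iff_of_subset ?_).2 ⟨y, ?_, ?_⟩)
  · exact monotone_filter_right B fun b _ hb => hb.trans hxy.le
  · exact mem_filter.2 ⟨hy, le_rfl⟩
  · exact fun hy' => (mem_filter.1 hy').2.not_gt hxy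

lemma splitsEvenly_breakpointColouring_of_subset {S : Finset α} (hSB : S ⊆ B) (hB : #B ≤ m) :
    SplitsEvenly (breakpointColouring m B) S := fun z _ => by
  refine le_add_left (card_le_one.2 fun x hx y hy => ?_)
  rw [mem_filter] at hx hy
  exact (breakpointColouring_strictMonoOn hB).injOn (hSB hx.1) (hSB hy.1) (hx.2.trans hy.2.symm)

lemma exists_splitsEvenly_breakpointColouring_of_lt {S : Finset α} (hm : m < #S) :
    ∃ B : Finset α, #B = m ∧ SplitsEvenly (breakpointColouring m B) S := by
  obtain ⟨t, ht⟩ := exists_orderEmbedding_le_iff_lt_mul_div hm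
  set B := univ.map (t.trans (S.orderEmbOfFin rfl)).toEmbedding
  have hB : #B = m := by simp [B]
  have hcolour : ∀ j, (breakpointColouring m B (S.orderEmbOfFin rfl j) : ℕ) = (m + 1) * j / #S :=
      fun j => by
    rw [breakpointColouring_val hB.le, card_filter_map_univ]
    simp only [RelEmbedding.coe_toEmbedding, RelEmbedding.coe_trans, Function.comp_apply,
      OrderEmbedding.le_iff_le, ht, Fin.card_filter_val_lt]
    exact min_eq_right (Nat.lt_succ_iff.1 ((Nat.div_lt_iff_lt_mul j.pos).2
      (Nat.mul_lt_mul_of_pos_left j.2 m.succ_pos)))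
  refine ⟨B, hB, fun z z' => ?_⟩
  conv_lhs => rw [← S.map_orderEmbOfFin_univ rfl]
  conv_rhs => rw [← S.map_orderEmbOfFin_univ rfl]
  simp only [card_filter_map_univ, RelEmbedding.coe_toEmbedding, Fin.ext_iff, hcolour]
  exact card_filter_mul_div_eq_le z.2 z'.2

lemma exists_splitsEvenly_breakpointColouring [Fintype α] (S : Finset α)
    (hm : m ≤ Fintype.card α) :
    ∃ B : Finset α, #B = m ∧ SplitsEvenly (breakpointColouring m B) S := by
  rcases lt_or_ge m #S with hlt | hle
  · exact exists_splitsEvenly_breakpointColouring_of_lt hlt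
  · obtain ⟨B, hSB, -, hB⟩ := exists_subsuperset_card_eq S.subset_univ hle (by simpa using hm)
    exact ⟨B, hB, splitsEvenly_breakpointColouring_of_subset hSB hB.le⟩

end Breakpoints

theorem exists_splitter_general (n k q : ℕ) (hq1 : 1 ≤ q) (hqn : q ≤ n) :
    ∃ F : Finset (Fin n → Fin q), F.card ≤ Nat.choose n (q - 1) ∧
      ∀ S : Finset (Fin n), S.card = k → ∃ f ∈ F, ∀ z z' : Fin q,
        (S.filter fun x => f x = z).card ≤ (S.filter fun x => f x = z').card + 1 := by
  obtain ⟨m, rfl⟩ : ∃ m, q = m + 1 := ⟨q - 1, by omega⟩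
  refine ⟨(univ.powersetCard m).image (breakpointColouring m), ?_, fun S _ => ?_⟩
  · exact card_image_le.trans (by simp)
  obtain ⟨B, hB, hsplit⟩ := exists_splitsEvenly_breakpointColouring (m := m) S
    (by simpa using Nat.le_of_succ_le hqn)
  exact ⟨_, mem_image_of_mem _ (mem_powersetCard.2 ⟨subset_univ B, hB⟩), hsplit⟩

/-- For all `1 ≤ k ≤ n` and `1 ≤ q ≤ n`, there is an `(n, k, q)`-splitter of size at most
`n choose (q - 1)`: a family `F` of functions `Fin n → Fin q` such that every `k`-set
`S ⊆ Fin n` is split evenly by some `f ∈ F`, i.e. for all colours `z, z'`, the sizes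
`|f⁻¹(z) ∩ S|` and `|f⁻¹(z') ∩ S|` differ by at most `1`. -/
theorem exists_splitter (n k q : ℕ) (hk1 : 1 ≤ k) (hkn : k ≤ n) (hq1 : 1 ≤ q) (hqn : q ≤ n) :
    ∃ F : Finset (Fin n → Fin q), F.card ≤ Nat.choose n (q - 1) ∧
      ∀ S : Finset (Fin n), S.card = k → ∃ f ∈ F, ∀ z z' : Fin q,
        (S.filter fun x => f x = z).card ≤ (S.filter fun x => f x = z').card + 1 :=
  exists_splitter_general n k q hq1 hqn
end

section
/- There exists an absolute constant c such that for all natural numbers n, k, q with 1 ≤ k ≤ n and q ≥ 1 there exists an (n, k, q)-universal family F of functions from {1, …, n} to {1, …, q} with |F| ≤ c · q^k · k · (log₂ n + log₂ q + 1). -/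
/-!
A uniformly random `f : Fin n → Fin q` extends a fixed colouring of a fixed `k`-set with
probability `q⁻ᵏ`, so among any set of such partial colourings some `f` extends at least a
`q⁻ᵏ`-fraction. Choosing such functions greedily, after `t` steps at most `N (1 - q⁻ᵏ)ᵗ` of the
`N = (n choose k) qᵏ < 2ˢ` partial colourings are left uncovered, where
`s = k (log₂ n + log₂ q + 2)`. As `(1 - 1/Q)^(Q-1) ≤ 1/2`, the choice `t = (qᵏ - 1) s + 1`
covers all of them.
-/

open Finset

lemma two_mul_pow_le_succ_pow {m : ℕ} (hm : 1 ≤ m) : 2 * m ^ m ≤ (m + 1) ^ m := by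
  have h := pow_add_mul_le_add_pow (a := m) (b := 1) (Nat.zero_le _) (Nat.zero_le _) m
  rwa [Nat.cast_id, mul_one, ← pow_succ', Nat.sub_add_cancel hm, ← two_mul] at h

lemma mul_pow_lt_succ_pow {N s : ℕ} (m : ℕ) (hN : N < 2 ^ s) :
    N * m ^ (m * s + 1) < (m + 1) ^ (m * s + 1) := by
  rcases Nat.eq_zero_or_pos m with rfl | hm
  · simp
  calc N * m ^ (m * s + 1) = N * (m ^ m) ^ s * m := by rw [pow_succ, pow_mul, mul_assoc]
    _ < 2 ^ s * (m ^ m) ^ s * (m + 1) := by gcongr; omega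
    _ = (2 * m ^ m) ^ s * (m + 1) := by rw [mul_pow]
    _ ≤ ((m + 1) ^ m) ^ s * (m + 1) := by gcongr; exact two_mul_pow_le_succ_pow hm
    _ = (m + 1) ^ (m * s + 1) := by rw [pow_succ, pow_mul]

/-- Greedy covering: each chosen `g` leaves at most an `m / (m + 1)`-fraction of the remaining
points uncovered. -/
lemma exists_cover_card_le_of_dense {γ P : Type*} [DecidableEq γ] (cov : γ → P → Prop)
    [∀ g, DecidablePred (cov g)] (m : ℕ) {R : Finset P}
    (hdense : ∀ R' ⊆ R, ∃ g, #R' ≤ (m + 1) * #{p ∈ R' | cov g p}) (t : ℕ)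
    (ht : #R * m ^ t < (m + 1) ^ t) :
    ∃ F : Finset γ, #F ≤ t ∧ ∀ p ∈ R, ∃ g ∈ F, cov g p := by
  induction t generalizing R with
  | zero =>
    have hR : R = ∅ := by simpa using ht
    exact ⟨∅, le_rfl, by simp [hR]⟩
  | succ t ih =>
    obtain ⟨g, hg⟩ := hdense R subset_rfl
    have hsplit := card_filter_add_card_filter_not (s := R) (cov g)
    set R' := {p ∈ R | ¬cov g p}
    have hshrink : (m + 1) * #R' ≤ m * #R := by nlinarith
    have ht' : #R' * m ^ t < (m + 1) ^ t := by
      refine Nat.lt_of_mul_lt_mul_left (a := m + 1) ?_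
      calc (m + 1) * (#R' * m ^ t) ≤ m * #R * m ^ t := by rw [← mul_assoc]; gcongr
        _ = #R * m ^ (t + 1) := by ring
        _ < (m + 1) ^ (t + 1) := ht
        _ = (m + 1) * (m + 1) ^ t := pow_succ' _ _
    obtain ⟨F, hF, hcov⟩ := ih (fun R'' h => hdense R'' (h.trans (filter_subset _ _))) ht'
    refine ⟨insert g F, (card_insert_le _ _).trans (by omega), fun p hp => ?_⟩
    by_cases hc : cov g p
    · exact ⟨g, mem_insert_self _ _, hc⟩
    · obtain ⟨g', hg', hc'⟩ := hcov p (mem_filter.2 ⟨hp, hc⟩)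
      exact ⟨g', mem_insert_of_mem hg', hc'⟩

open Fintype

variable {α β : Type*}

def Extends (f : α → β) (p : Σ S : Finset α, S → β) : Prop := ∀ x : p.1, f x = p.2 x

instance [DecidableEq β] (f : α → β) : DecidablePred (Extends f) := fun p =>
  inferInstanceAs (Decidable (∀ x : p.1, f x = p.2 x))

variable [Fintype α] [DecidableEq α] [Fintype β]

lemma card_sigma_powersetCard_univ (k : ℕ) :
    #((powersetCard k (univ : Finset α)).sigma fun S => (univ : Finset (S → β))) =
      (card α).choose k * card β ^ k := by
  rw [card_sigma, Finset.sum_congr rfl fun S hS => by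
    rw [card_univ, card_fun, card_coe, (mem_powersetCard.1 hS).2], sum_const, smul_eq_mul,
    card_powersetCard, card_univ]

variable [DecidableEq β]

lemma card_filter_extends (p : Σ S : Finset α, S → β) :
    #{f : α → β | Extends f p} = card β ^ (card α - #p.1) := by
  obtain ⟨S, ψ⟩ := p
  have h : ({f | Extends f ⟨S, ψ⟩} : Finset (α → β)) =
      piFinset fun x => if h : x ∈ S then {ψ ⟨x, h⟩} else univ := by
    ext f
    simp only [mem_filter, mem_univ, true_and, mem_piFinset, Extends, Subtype.forall]
    refine forall_congr' fun x => ?_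
    by_cases hx : x ∈ S <;> simp [hx]
  rw [h, card_piFinset]
  simp [apply_dite, prod_ite, filter_not, card_univ_sdiff]

lemma sum_card_filter_extends {k : ℕ} (R : Finset (Σ S : Finset α, S → β))
    (hR : ∀ p ∈ R, #p.1 = k) :
    ∑ f : α → β, #{p ∈ R | Extends f p} = #R * card β ^ (card α - k) := by
  have h := sum_card_bipartiteAbove_eq_sum_card_bipartiteBelow (s := univ) (t := R) (r := Extends)
  simp only [bipartiteAbove, bipartiteBelow] at h
  rw [h, Finset.sum_congr rfl fun p hp => by rw [card_filter_extends, hR p hp], sum_const,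
    smul_eq_mul]

lemma exists_extends_many [Nonempty β] {k : ℕ} (hk : k ≤ card α)
    (R : Finset (Σ S : Finset α, S → β)) (hR : ∀ p ∈ R, #p.1 = k) :
    ∃ f : α → β, #R ≤ card β ^ k * #{p ∈ R | Extends f p} := by
  obtain ⟨f, -, hf⟩ := exists_le_of_sum_le univ_nonempty (f := fun _ => #R)
    (g := fun f : α → β => card β ^ k * #{p ∈ R | Extends f p}) <| by
    rw [← mul_sum, sum_card_filter_extends R hR, sum_const, card_univ, card_fun, smul_eq_mul,
      mul_left_comm, ← pow_add, Nat.add_sub_cancel' hk, mul_comm]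
  exact ⟨f, hf⟩

lemma choose_mul_pow_lt_two_pow {n k : ℕ} (q : ℕ) (hk : k ≠ 0) :
    n.choose k * q ^ k < 2 ^ (k * (Nat.log 2 n + Nat.log 2 q + 2)) :=
  calc n.choose k * q ^ k ≤ n ^ k * q ^ k := by gcongr; exact Nat.choose_le_pow n k
    _ < (2 ^ (Nat.log 2 n + 1)) ^ k * (2 ^ (Nat.log 2 q + 1)) ^ k := by
      gcongr <;> exact Nat.lt_pow_succ_log_self one_lt_two _
    _ = 2 ^ (k * (Nat.log 2 n + Nat.log 2 q + 2)) := by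
      rw [← mul_pow, ← pow_add, ← pow_mul]; ring_nf

/-- There is an absolute constant `c` such that for all `1 ≤ k ≤ n` and `q ≥ 1` there is an
`(n, k, q)`-universal family of size at most `c · q^k · k · (log₂ n + log₂ q + 1)`: a family
`F` of functions `Fin n → Fin q` such that for every `k`-set `S ⊆ Fin n` and every colouring
`φ` of `S` there is `f ∈ F` agreeing with `φ` on `S`. -/
theorem exists_universal_family_small :
    ∃ c : ℕ, ∀ n k q : ℕ, 1 ≤ k → k ≤ n → 1 ≤ q →
      ∃ F : Finset (Fin n → Fin q),
        F.card ≤ c * q ^ k * k * (Nat.log 2 n + Nat.log 2 q + 1) ∧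
        ∀ S : Finset (Fin n), S.card = k → ∀ φ : Fin n → Fin q,
          ∃ f ∈ F, ∀ x ∈ S, f x = φ x := by
  refine ⟨2, fun n k q hk hkn hq => ?_⟩
  have : Nonempty (Fin q) := ⟨⟨0, hq⟩⟩
  obtain ⟨m, hm⟩ : ∃ m, q ^ k = m + 1 :=
    ⟨q ^ k - 1, (Nat.sub_add_cancel (Nat.one_le_pow _ _ hq)).symm⟩
  set s := k * (Nat.log 2 n + Nat.log 2 q + 2)
  set R := (powersetCard k (univ : Finset (Fin n))).sigma fun S => (univ : Finset (S → Fin q))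
  have hR : ∀ p ∈ R, #p.1 = k := fun p hp => (mem_powersetCard.1 (mem_sigma.1 hp).1).2
  have hRs : #R < 2 ^ s := by
    rw [card_sigma_powersetCard_univ, Fintype.card_fin, Fintype.card_fin]
    exact choose_mul_pow_lt_two_pow q (Nat.one_le_iff_ne_zero.mp hk)
  obtain ⟨F, hFt, hF⟩ := exists_cover_card_le_of_dense Extends m
    (fun R' hR' => by
      simpa [hm] using exists_extends_many (by simpa using hkn) R' fun p hp => hR p (hR' hp))
    (m * s + 1) (mul_pow_lt_succ_pow m hRs)
  refine ⟨F, hFt.trans ?_, fun S hS φ => ?_⟩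
  · have hs : 1 ≤ s := Nat.mul_pos hk (Nat.succ_pos _)
    calc m * s + 1 ≤ (m + 1) * s := by rw [add_one_mul]; omega
      _ ≤ q ^ k * (k * (2 * (Nat.log 2 n + Nat.log 2 q + 1))) := by
        rw [hm]; exact Nat.mul_le_mul_left _ (Nat.mul_le_mul_left _ (by omega))
      _ = 2 * q ^ k * k * (Nat.log 2 n + Nat.log 2 q + 1) := by ring
  · obtain ⟨f, hfF, hf⟩ := hF ⟨S, fun x => φ x⟩ (by simp [R, hS])
    exact ⟨f, hfF, fun x hx => hf ⟨x, hx⟩⟩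
end

section
/- There exists an absolute constant c such that for all natural numbers n, k, q with 1 ≤ k ≤ n and q ≥ 1 there exists an (n, k, q)-universal family F of functions from {1, …, n} to {1, …, q} with |F| ≤ c · q^k · k^(c·k) · (log₂ n + 1). -/
/-!
A map `α → Fin k` chosen uniformly at random is injective on a fixed `k`-set with probability
at least `k ^ (-k)`. With `n = |α|` and `M = (k ^ k - 1) k (log₂ n + 1) + 1`, the union bound over the
at most `n ^ k` many `k`-sets shows that some `M` maps form a perfect hash family, because
`n ^ k (1 - k ^ (-k)) ^ M < 1` by Bernoulli's inequality `2 m ^ m ≤ (m + 1) ^ m`. Composing this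
family with all `q ^ k` maps `Fin k → Fin q` gives a universal family.
-/

open Finset

variable {α β γ σ : Type*}

def IsPerfectHashFamily (k : ℕ) (H : Finset (α → β)) : Prop :=
  ∀ S : Finset α, #S = k → ∃ h ∈ H, Set.InjOn h S

def IsUniversalFamily (k : ℕ) (F : Finset (α → β)) : Prop :=
  ∀ S : Finset α, #S = k → ∀ φ : α → β, ∃ f ∈ F, ∀ x ∈ S, f x = φ x

theorem IsPerfectHashFamily.isUniversalFamily_image₂_comp [Nonempty α] [Fintype γ]
    [DecidableEq γ] [Fintype β] [DecidableEq (α → β)] {k : ℕ} {H : Finset (α → γ)}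
    (hH : IsPerfectHashFamily k H) :
    IsUniversalFamily k (image₂ (· ∘ ·) (univ : Finset (γ → β)) H) := by
  intro S hS φ
  obtain ⟨h, hH, hinj⟩ := hH S hS
  refine ⟨(φ ∘ Function.invFunOn h S) ∘ h, mem_image₂_of_mem (mem_univ _) hH, fun x hx => ?_⟩
  exact congrArg φ (hinj.leftInvOn_invFunOn hx)

theorem card_pow_le_card_injOn [Finite α] [Finite β] (S : Finset α) (hS : #S ≤ Nat.card β) :
    Nat.card β ^ (Nat.card α - #S) ≤ Nat.card {f : α → β // Set.InjOn f S} := by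
  classical
  have : Fintype α := Fintype.ofFinite α
  have : Fintype β := Fintype.ofFinite β
  obtain ⟨e⟩ : Nonempty (S ↪ β) := Function.Embedding.nonempty_of_card_le (by simpa using hS)
  let extend (g : {x // x ∉ S} → β) : {f : α → β // Set.InjOn f S} :=
    ⟨fun x => if hx : x ∈ S then e ⟨x, hx⟩ else g ⟨x, hx⟩, fun x hx y hy hxy => by
      simpa [dif_pos (show x ∈ S from hx), dif_pos (show y ∈ S from hy)] using hxy⟩
  have hextend : Function.Injective extend := fun g g' hgg' => funext fun x => by
    simpa [extend, dif_neg x.2] using congrFun (congrArg Subtype.val hgg') x.1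
  calc Nat.card β ^ (Nat.card α - #S) = Nat.card ({x // x ∉ S} → β) := by
        rw [Nat.card_fun, Nat.card_eq_fintype_card (α := {x // x ∉ S}),
          Fintype.card_subtype_compl, Fintype.card_coe, Nat.card_eq_fintype_card (α := α)]
    _ ≤ _ := Nat.card_le_card_of_injective extend hextend

theorem exists_tuple_hitting_of_card_mul_pow_lt [Finite α] (𝒮 : Finset σ) (P : σ → α → Prop)
    {g M : ℕ} (hg : ∀ s ∈ 𝒮, g ≤ Nat.card {a // P s a})
    (h : #𝒮 * (Nat.card α - g) ^ M < Nat.card α ^ M) :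
    ∃ t : Fin M → α, ∀ s ∈ 𝒮, ∃ i, P s (t i) := by
  classical
  have : Fintype α := Fintype.ofFinite α
  by_contra! hall
  have hcover : (univ : Finset (Fin M → α)) ⊆
      𝒮.biUnion fun s => Fintype.piFinset fun _ => {a | ¬ P s a} := fun t _ => by
    obtain ⟨s, hs, hst⟩ := hall t
    exact mem_biUnion.2 ⟨s, hs, Fintype.mem_piFinset.2 fun i => by simpa using hst i⟩
  have hbad : ∀ s ∈ 𝒮, #{a | ¬ P s a} ≤ Nat.card α - g := fun s hs => by
    rw [← Fintype.card_subtype, Fintype.card_subtype_compl, Nat.card_eq_fintype_card,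
      ← Nat.card_eq_fintype_card (α := {a // P s a})]
    exact Nat.sub_le_sub_left (hg s hs) _
  have := calc Nat.card α ^ M = #(univ : Finset (Fin M → α)) := by simp
    _ ≤ ∑ s ∈ 𝒮, #(Fintype.piFinset fun _ : Fin M => ({a | ¬ P s a} : Finset α)) :=
        (card_le_card hcover).trans card_biUnion_le
    _ ≤ #𝒮 * (Nat.card α - g) ^ M := by
        refine (sum_le_card_nsmul _ _ _ fun s hs => ?_).trans_eq (smul_eq_mul _ _)
        simpa using pow_le_pow_left₀ (Nat.zero_le _) (hbad s hs) M
  omega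

theorem two_mul_pow_self_le_succ_pow {m : ℕ} (hm : 0 < m) : 2 * m ^ m ≤ (m + 1) ^ m := by
  have := pow_add_mul_le_add_pow (Nat.zero_le m) (Nat.zero_le (2 * m + 1)) m
  rwa [mul_one, Nat.cast_id, ← pow_succ', Nat.sub_add_cancel hm, ← two_mul] at this

theorem mul_pow_lt_succ_pow_of_lt_two_pow {N r : ℕ} (m : ℕ) (hN : N < 2 ^ r) :
    N * m ^ (m * r + 1) < (m + 1) ^ (m * r + 1) := by
  rcases Nat.eq_zero_or_pos m with rfl | hm
  · simp
  calc N * m ^ (m * r + 1) < 2 ^ r * m ^ (m * r + 1) := by gcongr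
    _ = (2 * m ^ m) ^ r * m := by ring
    _ ≤ ((m + 1) ^ m) ^ r * (m + 1) := by
        gcongr
        exacts [two_mul_pow_self_le_succ_pow hm, m.le_succ]
    _ = (m + 1) ^ (m * r + 1) := by ring

theorem pow_self_sub_one_mul_add_one_le {k L : ℕ} (hk : 1 ≤ k) (hL : 1 ≤ L) :
    (k ^ k - 1) * (k * L) + 1 ≤ 2 * k ^ (2 * k) * L := by
  have hpow : k ^ k * k ≤ k ^ (2 * k) := by
    rw [← pow_succ]; exact Nat.pow_le_pow_right hk (by omega)
  have hmain : (k ^ k - 1) * (k * L) ≤ k ^ (2 * k) * L := by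
    rw [← mul_assoc]; gcongr; exact (Nat.mul_le_mul_right k (Nat.sub_le _ 1)).trans hpow
  have hone : 1 * 1 ≤ k ^ (2 * k) * L := Nat.mul_le_mul (Nat.one_le_pow _ _ hk) hL
  rw [mul_assoc, two_mul]
  omega

theorem exists_isPerfectHashFamily [Finite α] {k : ℕ} (hk : 1 ≤ k) (hkα : k ≤ Nat.card α) :
    ∃ H : Finset (α → Fin k), #H ≤ (k ^ k - 1) * (k * (Nat.log 2 (Nat.card α) + 1)) + 1 ∧
      IsPerfectHashFamily k H := by
  classical
  have : Fintype α := Fintype.ofFinite α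
  set n := Nat.card α
  set M := (k ^ k - 1) * (k * (Nat.log 2 n + 1)) + 1
  have hcount : #(powersetCard k (univ : Finset α)) * (Nat.card (α → Fin k) - k ^ (n - k)) ^ M <
      Nat.card (α → Fin k) ^ M := by
    have hn : n ^ k < 2 ^ (k * (Nat.log 2 n + 1)) := by
      rw [pow_mul']
      exact Nat.pow_lt_pow_left (Nat.lt_pow_succ_log_self one_lt_two n) (by omega)
    have hsplit : k ^ n = k ^ (n - k) * k ^ k := by rw [← pow_add, Nat.sub_add_cancel hkα]
    have hkk : k ^ k - 1 + 1 = k ^ k := Nat.sub_add_cancel (Nat.one_le_pow _ _ hk)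
    rw [Nat.card_fun, Nat.card_eq_fintype_card (α := Fin k), Fintype.card_fin, card_powersetCard,
      card_univ, ← Nat.card_eq_fintype_card, hsplit, ← Nat.mul_sub_one]
    calc n.choose k * (k ^ (n - k) * (k ^ k - 1)) ^ M
        ≤ (k ^ (n - k)) ^ M * (n ^ k * (k ^ k - 1) ^ M) := by
          rw [mul_pow, mul_left_comm]
          gcongr
          exact Nat.choose_le_pow n k
      _ < (k ^ (n - k)) ^ M * (k ^ k) ^ M := by
          gcongr
          simpa [hkk] using mul_pow_lt_succ_pow_of_lt_two_pow (k ^ k - 1) hn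
      _ = (k ^ (n - k) * k ^ k) ^ M := (mul_pow _ _ _).symm
  have hgood : ∀ S ∈ powersetCard k (univ : Finset α),
      k ^ (n - k) ≤ Nat.card {f : α → Fin k // Set.InjOn f S} := fun S hS => by
    rw [mem_powersetCard_univ] at hS
    simpa only [hS, Nat.card_fin] using card_pow_le_card_injOn (β := Fin k) S (by simp [hS])
  obtain ⟨t, ht⟩ := exists_tuple_hitting_of_card_mul_pow_lt _ _ hgood hcount
  refine ⟨univ.image t, card_image_le.trans (by simp), fun S hS => ?_⟩
  obtain ⟨i, hi⟩ := ht S (mem_powersetCard_univ.2 hS)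
  exact ⟨t i, mem_image_of_mem t (mem_univ i), hi⟩

/-- There is an absolute constant `c` such that for all `1 ≤ k ≤ n` and `q ≥ 1` there is an
`(n, k, q)`-universal family of size at most `c · q^k · k^(c·k) · (log₂ n + 1)`: a family
`F` of functions `Fin n → Fin q` such that for every `k`-set `S ⊆ Fin n` and every colouring
`φ` of `S` there is `f ∈ F` agreeing with `φ` on `S`. -/
theorem exists_universal_family_log_n :
    ∃ c : ℕ, ∀ n k q : ℕ, 1 ≤ k → k ≤ n → 1 ≤ q →
      ∃ F : Finset (Fin n → Fin q),
        F.card ≤ c * q ^ k * k ^ (c * k) * (Nat.log 2 n + 1) ∧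
        ∀ S : Finset (Fin n), S.card = k → ∀ φ : Fin n → Fin q,
          ∃ f ∈ F, ∀ x ∈ S, f x = φ x := by
  refine ⟨2, fun n k q hk hkn _ => ?_⟩
  obtain ⟨H, hHcard, hH⟩ := exists_isPerfectHashFamily (α := Fin n) hk (by simpa using hkn)
  have : Nonempty (Fin n) := ⟨⟨0, by omega⟩⟩
  refine ⟨image₂ (· ∘ ·) univ H, ?_, hH.isUniversalFamily_image₂_comp⟩
  calc #(image₂ (· ∘ ·) univ H) ≤ q ^ k * #H := (card_image₂_le _ _ _).trans (by simp)
    _ ≤ q ^ k * ((k ^ k - 1) * (k * (Nat.log 2 n + 1)) + 1) := by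
        simpa using Nat.mul_le_mul_left _ hHcard
    _ ≤ q ^ k * (2 * k ^ (2 * k) * (Nat.log 2 n + 1)) :=
        Nat.mul_le_mul_left _ (pow_self_sub_one_mul_add_one_le hk (Nat.le_add_left 1 _))
    _ = 2 * q ^ k * k ^ (2 * k) * (Nat.log 2 n + 1) := by ring
end

section
/- Let k, ℓ be natural numbers, let G be a finite simple graph, and let P = (u₀, u₁, …, u_q, u_{q+1}) be a path in G (a sequence of distinct vertices with consecutive vertices adjacent) with q ≥ k + 2 such that every vertex u_i with 1 ≤ i ≤ q + 1 has degree exactly 2 in G. Let F ⊆ E(G) be inclusion-wise minimal with the property that G/F ∈ T_ℓ, and suppose |F| ≤ k. Then no edge of F is incident to any of the vertices u₁, …, u_q (i.e., to any vertex of V(P) \ {u₀, u_{q+1}}). -/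
/-- The graph `G/F` obtained from `G` by contracting all edges of `F`: its vertices are the
connected components of the spanning subgraph `(V(G), F)`, and two distinct components are
adjacent iff `G` has an edge with one endpoint in each. -/
def contractEdges {V : Type} (G : SimpleGraph V) (F : Set (Sym2 V)) :
    SimpleGraph ((SimpleGraph.fromEdgeSet F).ConnectedComponent) :=
  SimpleGraph.fromRel (fun c d =>
    ∃ u u' : V, G.Adj u u' ∧ (SimpleGraph.fromEdgeSet F).connectedComponentMk u = c ∧
      (SimpleGraph.fromEdgeSet F).connectedComponentMk u' = d)

/-- `T ∈ 𝕋_ℓ`: `T` is connected and `|E(T)| ≤ |V(T)| - 1 + ℓ`, i.e. `T` can be made into a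
tree by deleting at most `ℓ` edges. -/
def MemTl {W : Type} (T : SimpleGraph W) (ℓ : ℕ) : Prop :=
  T.Connected ∧ T.edgeSet.ncard ≤ Nat.card W - 1 + ℓ

/-!
Write `u₀, …, u_{q+1}` for the path and `eᵢ = uᵢu_{i+1}`, `0 ≤ i ≤ q`. An edge of `F` at an
inner vertex is some `eⱼ`, and since `|F| ≤ q - 2` at least three of the `eᵢ` avoid `F`, so two of
them lie on the same side of `eⱼ`. Reversing the path if necessary, we find `eⱼ ∈ F` with
`e_{j+1} ∉ F` and a later `eₙ ∉ F`, `n` minimal. In `G/(F ∖ {eⱼ})` the vertex `u_{j+1}` becomes a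
singleton component whose only neighbours are the components of `uⱼ` and `u_{j+2}`, and these two
are not adjacent: the component of `u_{j+2}` is the segment `u_{j+2} … uₙ`, whose only other
neighbour `u_{n+1}` could reach `uⱼ` only if all path edges but `e_{j+1}` and `eₙ` were in `F`.
Contracting that singleton into the component of `uⱼ` therefore loses one vertex and at most one
edge, so `G/(F ∖ {eⱼ}) ∈ 𝕋_ℓ` as well, contradicting the minimality of `F`.
-/

open SimpleGraph

theorem Nat.exists_le_lt_and_not_succ {P : ℕ → Prop} {a b : ℕ} (hab : a ≤ b) (ha : P a)
    (hb : ¬ P b) : ∃ j, a ≤ j ∧ j < b ∧ P j ∧ ¬ P (j + 1) := by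
  induction b, hab using Nat.le_induction with
  | base => exact absurd ha hb
  | succ b hab ih =>
    by_cases hPb : P b
    · exact ⟨b, hab, b.lt_succ_self, hPb, hb⟩
    · obtain ⟨j, h₁, h₂, h₃⟩ := ih hPb
      exact ⟨j, h₁, by omega, h₃⟩

theorem Set.exists_mem_ne_ne_of_two_lt_ncard {α : Type*} {N : Set α} (hN : 2 < N.ncard)
    (a b : α) : ∃ m ∈ N, m ≠ a ∧ m ≠ b := by
  by_contra! h
  have hsub : N ⊆ {a, b} := fun m hm => by
    by_cases hma : m = a
    exacts [.inl hma, .inr (h m hm hma)]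
  exact hN.not_ge ((Set.ncard_le_ncard hsub).trans ((Set.ncard_insert_le _ _).trans (by simp)))

theorem Set.exists_pair_lt_of_two_lt_ncard {α : Type*} [LinearOrder α] {N : Set α} {c : α}
    (hN : 2 < N.ncard) (hc : c ∉ N) :
    (∃ a ∈ N, ∃ b ∈ N, c < a ∧ a < b) ∨ (∃ a ∈ N, ∃ b ∈ N, b < a ∧ a < c) := by
  have hfin : N.Finite := Set.finite_of_ncard_pos (by omega)
  have hsplit : N.ncard ≤ (N ∩ Set.Ioi c).ncard + (N ∩ Set.Iio c).ncard := by
    refine (Set.ncard_le_ncard (fun a ha => ?_) ((hfin.inter_of_left _).union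
      (hfin.inter_of_left _))).trans (Set.ncard_union_le _ _)
    rcases lt_or_gt_of_ne (ne_of_mem_of_not_mem ha hc) with h | h
    exacts [.inr ⟨ha, h⟩, .inl ⟨ha, h⟩]
  by_cases hR : 1 < (N ∩ Set.Ioi c).ncard
  · obtain ⟨a, ⟨ha, hca⟩, b, ⟨hb, hcb⟩, hab⟩ := (Set.one_lt_ncard (hfin.inter_of_left _)).mp hR
    rcases lt_or_gt_of_ne hab with h | h
    exacts [.inl ⟨a, ha, b, hb, hca, h⟩, .inl ⟨b, hb, a, ha, hcb, h⟩]
  · obtain ⟨a, ⟨ha, hac⟩, b, ⟨hb, hbc⟩, hab⟩ :=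
      (Set.one_lt_ncard (hfin.inter_of_left _)).mp (by omega : 1 < (N ∩ Set.Iio c).ncard)
    rcases lt_or_gt_of_ne hab with h | h
    exacts [.inr ⟨b, hb, a, ha, h, hbc⟩, .inr ⟨a, ha, b, hb, h, hac⟩]

/- `φ` glues the two vertices `a` and `b` of `T` and nothing else; when they have no common
neighbour, only the edge `ab` can be lost. -/
section Merge

variable {W W₀ : Type} {T : SimpleGraph W} {T₀ : SimpleGraph W₀} {φ : W → W₀} {a b : W}

theorem natCard_eq_add_one_of_merge [Finite W] (hφ : Function.Surjective φ)
    (hfib : ∀ c d, φ c = φ d ↔ c = d ∨ s(c, d) = s(a, b)) (hab : a ≠ b) :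
    Nat.card W = Nat.card W₀ + 1 := by
  have hinj : Set.InjOn φ {a}ᶜ := fun c hc d hd h => by
    rcases (hfib c d).mp h with h | h
    · exact h
    · rcases Sym2.eq_iff.mp h with ⟨rfl, -⟩ | ⟨-, rfl⟩ <;> simp_all
  have himage : φ '' {a}ᶜ = Set.univ := by
    refine Set.eq_univ_of_forall fun y => ?_
    obtain ⟨c, rfl⟩ := hφ y
    by_cases hc : c = a
    · exact ⟨b, Ne.symm (hc ▸ hab), (hfib b c).mpr (.inr (by rw [hc, Sym2.eq_swap]))⟩
    · exact ⟨c, hc, rfl⟩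
  rw [← Set.ncard_univ W₀, ← himage, hinj.ncard_image, ← Set.ncard_univ W,
    ← Set.ncard_sdiff_singleton_add_one (Set.mem_univ a), Set.compl_eq_univ_sdiff]

theorem injOn_map_edgeSet_of_merge (hfib : ∀ c d, φ c = φ d ↔ c = d ∨ s(c, d) = s(a, b))
    (hcommon : ∀ c, T.Adj c a → ¬ T.Adj c b) :
    Set.InjOn (Sym2.map φ) (T.edgeSet \ {s(a, b)}) := by
  have hcommon' : ∀ c x y, s(x, y) = s(a, b) → T.Adj c x → T.Adj c y → False := by
    intro c x y hxy hx hy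
    rcases Sym2.eq_iff.mp hxy with ⟨rfl, rfl⟩ | ⟨rfl, rfl⟩
    exacts [hcommon c hx hy, hcommon c hy hx]
  have key : ∀ c₁ d₁ c₂ d₂, T.Adj c₁ d₁ → T.Adj c₂ d₂ → s(c₁, d₁) ≠ s(a, b) →
      φ c₁ = φ c₂ → φ d₁ = φ d₂ → s(c₁, d₁) = s(c₂, d₂) := by
    intro c₁ d₁ c₂ d₂ h₁ h₂ hne hc hd
    rcases (hfib c₁ c₂).mp hc with rfl | hc <;> rcases (hfib d₁ d₂).mp hd with rfl | hd
    · rfl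
    · exact (hcommon' c₁ d₁ d₂ hd h₁ h₂).elim
    · exact (hcommon' d₁ c₁ c₂ hc h₁.symm h₂.symm).elim
    · rcases Sym2.eq_iff.mp hc with ⟨rfl, rfl⟩ | ⟨rfl, rfl⟩ <;>
        rcases Sym2.eq_iff.mp hd with ⟨rfl, rfl⟩ | ⟨rfl, rfl⟩ <;> simp_all
  rintro ⟨c₁, d₁⟩ ⟨h₁, hne₁⟩ ⟨c₂, d₂⟩ ⟨h₂, -⟩ h
  rw [Sym2.map_mk, Sym2.map_mk, Sym2.eq_iff] at h
  rcases h with ⟨hc, hd⟩ | ⟨hc, hd⟩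
  · exact key c₁ d₁ c₂ d₂ h₁ h₂ hne₁ hc hd
  · exact (key c₁ d₁ d₂ c₂ h₁ h₂.symm hne₁ hc hd).trans Sym2.eq_swap

theorem ncard_edgeSet_le_add_one_of_merge [Finite W₀]
    (hfib : ∀ c d, φ c = φ d ↔ c = d ∨ s(c, d) = s(a, b))
    (hcommon : ∀ c, T.Adj c a → ¬ T.Adj c b)
    (hmap : ∀ c d, T.Adj c d → φ c ≠ φ d → T₀.Adj (φ c) (φ d)) :
    T.edgeSet.ncard ≤ T₀.edgeSet.ncard + 1 := by
  have hmaps : Set.MapsTo (Sym2.map φ) (T.edgeSet \ {s(a, b)}) T₀.edgeSet := by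
    rintro ⟨c, d⟩ ⟨h, hne⟩
    refine hmap c d h fun hcd => hne ?_
    rcases (hfib c d).mp hcd with rfl | h'
    exacts [(T.loopless.irrefl c h).elim, h']
  calc T.edgeSet.ncard ≤ (T.edgeSet \ {s(a, b)}).ncard + 1 := by
        simpa using Set.ncard_le_ncard_sdiff_add_ncard T.edgeSet {s(a, b)}
    _ = (Sym2.map φ '' (T.edgeSet \ {s(a, b)})).ncard + 1 := by
        rw [(injOn_map_edgeSet_of_merge hfib hcommon).ncard_image]
    _ ≤ T₀.edgeSet.ncard + 1 := by
        gcongr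
        exacts [Set.toFinite _, hmaps.image_subset]

theorem MemTl.of_merge [Finite W] {ℓ : ℕ} (h₀ : MemTl T₀ ℓ) (hT : T.Connected)
    (hφ : Function.Surjective φ) (hfib : ∀ c d, φ c = φ d ↔ c = d ∨ s(c, d) = s(a, b))
    (hab : a ≠ b) (hcommon : ∀ c, T.Adj c a → ¬ T.Adj c b)
    (hmap : ∀ c d, T.Adj c d → φ c ≠ φ d → T₀.Adj (φ c) (φ d)) : MemTl T ℓ := by
  have : Finite W₀ := .of_surjective φ hφ
  have : Nonempty W₀ := h₀.1.nonempty
  have hV := natCard_eq_add_one_of_merge hφ hfib hab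
  have hE := ncard_edgeSet_le_add_one_of_merge hfib hcommon hmap
  have hE₀ := h₀.2
  have := Nat.card_pos (α := W₀)
  exact ⟨hT, by omega⟩

end Merge

variable {V : Type}

theorem reachable_sup_edge_iff {H : SimpleGraph V} {x v y z : V} :
    (H ⊔ edge x v).Reachable y z ↔ H.Reachable y z ∨ (H.Reachable y x ∧ H.Reachable v z) ∨
      (H.Reachable y v ∧ H.Reachable x z) := by
  constructor
  · rw [reachable_iff_reflTransGen]
    intro h
    induction h with
    | refl => exact .inl .rfl
    | @tail b c _ hadj ih =>
      rw [sup_adj, edge_adj] at hadj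
      rcases hadj with hadj | ⟨⟨hb, hc⟩ | ⟨hb, hc⟩, -⟩
      · have := hadj.reachable
        rcases ih with h | ⟨h₁, h₂⟩ | ⟨h₁, h₂⟩
        exacts [.inl (h.trans this), .inr (.inl ⟨h₁, h₂.trans this⟩),
          .inr (.inr ⟨h₁, h₂.trans this⟩)]
      · subst b c
        rcases ih with h | ⟨h₁, h₂⟩ | ⟨h₁, -⟩
        exacts [.inr (.inl ⟨h, .rfl⟩), .inl (h₁.trans h₂.symm), .inl h₁]
      · subst b c
        rcases ih with h | ⟨h₁, -⟩ | ⟨h₁, h₂⟩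
        exacts [.inr (.inr ⟨h, .rfl⟩), .inl h₁, .inl (h₁.trans h₂.symm)]
  · have hle : H ≤ H ⊔ edge x v := le_sup_left
    have hxv : (H ⊔ edge x v).Reachable x v := by
      by_cases h : x = v
      · exact h ▸ .rfl
      · exact Adj.reachable (.inr ((edge_adj _ _ _ _).mpr ⟨.inl ⟨rfl, rfl⟩, h⟩))
    rintro (h | ⟨h₁, h₂⟩ | ⟨h₁, h₂⟩)
    exacts [h.mono hle, ((h₁.mono hle).trans hxv).trans (h₂.mono hle),
      ((h₁.mono hle).trans hxv.symm).trans (h₂.mono hle)]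

theorem ConnectedComponent.eq_iff_of_eq_sup_edge {H K : SimpleGraph V} {x v : V}
    (hK : K = H ⊔ edge x v) {φ : H.ConnectedComponent → K.ConnectedComponent}
    (hφ : ∀ y, φ (H.connectedComponentMk y) = K.connectedComponentMk y)
    (c d : H.ConnectedComponent) :
    φ c = φ d ↔ c = d ∨ s(c, d) = s(H.connectedComponentMk x, H.connectedComponentMk v) := by
  subst hK
  induction c, d using ConnectedComponent.ind₂ with | _ y z
  simp only [hφ, ConnectedComponent.eq, reachable_sup_edge_iff, Sym2.eq_iff]
  rw [reachable_comm (u := z) (v := v), reachable_comm (u := z) (v := x)]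

section Contraction

variable {G : SimpleGraph V} {F : Set (Sym2 V)}

theorem contractEdges_adj {c d : (fromEdgeSet F).ConnectedComponent} :
    (contractEdges G F).Adj c d ↔ c ≠ d ∧ ∃ y z, G.Adj y z ∧
      (fromEdgeSet F).connectedComponentMk y = c ∧ (fromEdgeSet F).connectedComponentMk z = d := by
  refine (fromRel_adj ..).trans (and_congr_right fun _ => ⟨?_, .inl⟩)
  rintro (h | ⟨y, z, hyz, rfl, rfl⟩)
  exacts [h, ⟨z, y, hyz.symm, rfl, rfl⟩]

theorem connected_contractEdges (hG : G.Connected) (F : Set (Sym2 V)) :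
    (contractEdges G F).Connected := by
  have : Nonempty V := hG.nonempty
  refine (connected_iff_exists_forall_reachable _).mpr
    ⟨(fromEdgeSet F).connectedComponentMk (Classical.arbitrary V), fun c => ?_⟩
  induction c using ConnectedComponent.ind with | _ z
  rw [reachable_iff_reflTransGen]
  refine Relation.ReflTransGen.lift' _ (fun y z hyz => show Relation.ReflTransGen _ _ _ from ?_)
    _ _ ((reachable_iff_reflTransGen _ _).mp (hG.preconnected _ z))
  by_cases h : (fromEdgeSet F).connectedComponentMk y = (fromEdgeSet F).connectedComponentMk z
  · exact h ▸ Relation.ReflTransGen.refl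
  · exact .single (contractEdges_adj.mpr ⟨h, y, z, hyz, rfl, rfl⟩)

theorem connected_of_connected_contractEdges (hF : F ⊆ G.edgeSet)
    (h : (contractEdges G F).Connected) : G.Connected := by
  let ψ := ConnectedComponent.map (Hom.ofLE ((fromEdgeSet_le G).mpr (Set.sdiff_subset.trans hF)))
  have : Nonempty V := ⟨h.nonempty.some.out⟩
  have hψ : ∀ c d, (contractEdges G F).Reachable c d → ψ c = ψ d := by
    intro c d h
    rw [reachable_iff_reflTransGen] at h
    induction h with
    | refl => rfl
    | tail _ hadj ih =>
      obtain ⟨-, y, z, hyz, rfl, rfl⟩ := contractEdges_adj.mp hadj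
      exact ih.trans (ConnectedComponent.sound hyz.reachable)
  exact ⟨fun y z => ConnectedComponent.exact (hψ _ _ (h.preconnected
    ((fromEdgeSet F).connectedComponentMk y) ((fromEdgeSet F).connectedComponentMk z)))⟩

theorem contractEdges_adj_map_ofLE {F' : Set (Sym2 V)} (h : fromEdgeSet F' ≤ fromEdgeSet F)
    {c d : (fromEdgeSet F').ConnectedComponent} (hcd : (contractEdges G F').Adj c d)
    (hne : c.map (Hom.ofLE h) ≠ d.map (Hom.ofLE h)) :
    (contractEdges G F).Adj (c.map (Hom.ofLE h)) (d.map (Hom.ofLE h)) := by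
  obtain ⟨-, y, z, hyz, rfl, rfl⟩ := contractEdges_adj.mp hcd
  exact contractEdges_adj.mpr ⟨hne, y, z, hyz, rfl, rfl⟩

/- Without `xv`, the vertex `x` is a singleton component whose neighbours in the contraction are
the components of `v` and `w`; contracting `xv` again is a merge in the sense above. -/
theorem memTl_contractEdges_sdiff [Finite V] {ℓ : ℕ} (hFE : F ⊆ G.edgeSet) {x v w : V}
    (hx : ∀ y, G.Adj x y → y = v ∨ y = w) (hxv : s(x, v) ∈ F) (hxw : s(x, w) ∉ F)
    (hvw : ¬ (contractEdges G (F \ {s(x, v)})).Adj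
      ((fromEdgeSet (F \ {s(x, v)})).connectedComponentMk v)
      ((fromEdgeSet (F \ {s(x, v)})).connectedComponentMk w))
    (hF : MemTl (contractEdges G F) ℓ) : MemTl (contractEdges G (F \ {s(x, v)})) ℓ := by
  set H := fromEdgeSet (F \ {s(x, v)})
  have hle : H ≤ fromEdgeSet F := fromEdgeSet_mono Set.sdiff_subset
  have hne : x ≠ v := (G.mem_edgeSet.mp (hFE hxv)).ne
  have hisolated : ∀ t, H.Reachable x t → t = x := by
    rintro t ⟨_ | ⟨hadj, -⟩⟩
    · rfl
    · obtain ⟨⟨hF', hne'⟩, -⟩ := (fromEdgeSet_adj _).mp hadj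
      rcases hx _ (G.mem_edgeSet.mp (hFE hF')) with rfl | rfl
      exacts [(hne' rfl).elim, (hxw hF').elim]
  have hsup : fromEdgeSet F = H ⊔ edge x v := by
    rw [edge, ← fromEdgeSet_union, Set.sdiff_union_of_subset (Set.singleton_subset_iff.mpr hxv)]
  refine hF.of_merge (connected_contractEdges (connected_of_connected_contractEdges hFE hF.1) _)
    (ConnectedComponent.surjective_map_ofLE hle)
    (ConnectedComponent.eq_iff_of_eq_sup_edge hsup fun _ => rfl)
    (fun h => hne (hisolated v (ConnectedComponent.exact h)).symm) ?_
    (fun c d => contractEdges_adj_map_ofLE hle)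
  intro c hcx hcv
  obtain ⟨-, y, z, hyz, rfl, hz⟩ := contractEdges_adj.mp hcx
  obtain rfl := hisolated z (ConnectedComponent.exact hz).symm
  rcases hx y hyz.symm with rfl | rfl
  exacts [(contractEdges G _).loopless.irrefl _ hcv, hvw hcv.symm]

end Contraction

theorem SimpleGraph.eq_or_eq_of_degree_eq_two {G : SimpleGraph V} {x v w y : V}
    [Fintype (G.neighborSet x)] (hx : G.degree x = 2) (hv : G.Adj x v) (hw : G.Adj x w)
    (hvw : v ≠ w) (hy : G.Adj x y) : y = v ∨ y = w := by
  classical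
  have hsub : ({v, w} : Finset V) ⊆ G.neighborFinset x := by
    intro t ht
    rcases Finset.mem_insert.mp ht with rfl | ht
    · exact (G.mem_neighborFinset _ _).mpr hv
    · exact Finset.mem_singleton.mp ht ▸ (G.mem_neighborFinset _ _).mpr hw
  have := Finset.eq_of_subset_of_card_le hsub
    (by rw [Finset.card_pair hvw, card_neighborFinset_eq_degree, hx])
  simpa [← this] using (G.mem_neighborFinset x y).mpr hy

namespace SimpleGraph.Walk

variable {G : SimpleGraph V} {a b : V}

theorem getVert_mem_support_tail (p : G.Walk a b) {i : ℕ} (hi₁ : 1 ≤ i) (hi₂ : i ≤ p.length) :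
    p.getVert i ∈ p.support.tail := by
  obtain ⟨k, rfl⟩ := Nat.exists_eq_add_of_le' hi₁
  rw [p.getVert_eq_support_getElem hi₂, ← List.getElem_tail]
  exact List.getElem_mem (by simp; omega)

theorem exists_getVert_eq_of_mem_dropLast {x : V} (p : G.Walk a b)
    (hx : x ∈ p.support.tail.dropLast) : ∃ i, 1 ≤ i ∧ i < p.length ∧ p.getVert i = x := by
  obtain ⟨k, hk, rfl⟩ := List.mem_iff_getElem.mp hx
  simp only [List.length_dropLast, List.length_tail, length_support] at hk
  refine ⟨k + 1, by omega, by omega, ?_⟩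
  rw [List.getElem_dropLast, List.getElem_tail, p.getVert_eq_support_getElem (by omega)]

end SimpleGraph.Walk

structure IsBarePath (G : SimpleGraph V) (u : ℕ → V) (q : ℕ) : Prop where
  injOn : Set.InjOn u (Set.Iic (q + 1))
  adj : ∀ i ≤ q, G.Adj (u i) (u (i + 1))
  eq_or_eq_of_adj : ∀ i, 1 ≤ i → i ≤ q → ∀ y, G.Adj (u i) y → y = u (i - 1) ∨ y = u (i + 1)

theorem SimpleGraph.Walk.IsPath.isBarePath {G : SimpleGraph V} [G.LocallyFinite] {a b : V}
    {p : G.Walk a b} {q : ℕ} (hp : p.IsPath) (hlen : p.length = q + 1)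
    (hdeg : ∀ i, 1 ≤ i → i ≤ q → G.degree (p.getVert i) = 2) : IsBarePath G p.getVert q where
  injOn i hi j hj h := hp.getVert_injOn (by simp_all) (by simp_all) h
  adj i hi := p.adj_getVert_succ (by omega)
  eq_or_eq_of_adj i hi₁ hi₂ y hy := by
    refine eq_or_eq_of_degree_eq_two (hdeg i hi₁ hi₂) ?_ (p.adj_getVert_succ (by omega)) ?_ hy
    · simpa [Nat.sub_add_cancel hi₁] using (p.adj_getVert_succ (i := i - 1) (by omega)).symm
    · intro h
      have := hp.getVert_injOn (by simp; omega) (by simp; omega) h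
      omega

theorem sym2_reverse_sub_eq {u : ℕ → V} {q m : ℕ} (hm : m ≤ q) :
    s(u (q + 1 - (q - m)), u (q + 1 - (q - m + 1))) = s(u m, u (m + 1)) := by
  rw [show q + 1 - (q - m) = m + 1 by omega, show q + 1 - (q - m + 1) = m by omega, Sym2.eq_swap]

namespace IsBarePath

variable {G : SimpleGraph V} {u : ℕ → V} {q : ℕ} {F : Set (Sym2 V)}

theorem reverse (hu : IsBarePath G u q) : IsBarePath G (fun i => u (q + 1 - i)) q where
  injOn i hi j hj h := by
    have := hu.injOn (show q + 1 - i ≤ q + 1 by omega) (show q + 1 - j ≤ q + 1 by omega) h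
    simp only [Set.mem_Iic] at hi hj
    omega
  adj i hi := by
    simpa [show q + 1 - (i + 1) = q - i by omega, show q + 1 - i = q - i + 1 by omega] using
      (hu.adj (q - i) (by omega)).symm
  eq_or_eq_of_adj i hi₁ hi₂ y hy := by
    rcases hu.eq_or_eq_of_adj (q + 1 - i) (by omega) (by omega) y hy with h | h
    · exact .inr (by rwa [show q + 1 - (i + 1) = q + 1 - i - 1 by omega])
    · exact .inl (by rwa [show q + 1 - (i - 1) = q + 1 - i + 1 by omega])

theorem injOn_edge (hu : IsBarePath G u q) :
    Set.InjOn (fun m => s(u m, u (m + 1))) (Set.Iic q) := by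
  intro m hm m' hm' h
  simp only [Set.mem_Iic] at hm hm'
  have hinj {i j : ℕ} (hi : i ≤ q + 1) (hj : j ≤ q + 1) (h : u i = u j) : i = j :=
    hu.injOn hi hj h
  rcases Sym2.eq_iff.mp h with ⟨h, -⟩ | ⟨h₁, h₂⟩
  · exact hinj (by omega) (by omega) h
  · have := hinj (by omega) (by omega) h₁
    have := hinj (by omega) (by omega) h₂
    omega

theorem exists_edge_mem (hu : IsBarePath G u q) (hFE : F ⊆ G.edgeSet) {i : ℕ} (hi₁ : 1 ≤ i)
    (hi₂ : i ≤ q) {e : Sym2 V} (he : e ∈ F) (hie : u i ∈ e) :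
    ∃ j ≤ q, s(u j, u (j + 1)) ∈ F := by
  obtain ⟨y, rfl⟩ := Sym2.mem_iff_exists.mp hie
  rcases hu.eq_or_eq_of_adj i hi₁ hi₂ y (G.mem_edgeSet.mp (hFE he)) with rfl | rfl
  exacts [⟨i - 1, by omega, by rwa [Nat.sub_add_cancel hi₁, Sym2.eq_swap]⟩, ⟨i, hi₂, he⟩]

theorem two_lt_ncard_setOf_notMem (hu : IsBarePath G u q) (hF : F.Finite)
    (hcard : F.ncard + 2 ≤ q) : 2 < {m | m ≤ q ∧ s(u m, u (m + 1)) ∉ F}.ncard := by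
  have hin : {m | m ≤ q ∧ s(u m, u (m + 1)) ∈ F}.ncard ≤ F.ncard := by
    rw [← (hu.injOn_edge.mono fun m hm => hm.1).ncard_image]
    exact Set.ncard_le_ncard (by rintro _ ⟨m, hm, rfl⟩; exact hm.2) hF
  have hsplit : (Set.Iic q).ncard ≤ {m | m ≤ q ∧ s(u m, u (m + 1)) ∈ F}.ncard +
      {m | m ≤ q ∧ s(u m, u (m + 1)) ∉ F}.ncard := by
    refine (Set.ncard_le_ncard (fun m hm => ?_) ?_).trans (Set.ncard_union_le _ _)
    · by_cases h : s(u m, u (m + 1)) ∈ F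
      exacts [.inl ⟨hm, h⟩, .inr ⟨hm, h⟩]
    · exact ((Set.finite_Iic q).subset fun m hm => hm.1).union
        ((Set.finite_Iic q).subset fun m hm => hm.1)
  rw [Set.ncard_Iic_nat] at hsplit
  omega

theorem exists_eq_of_reachable (hu : IsBarePath G u q) (hF : F ⊆ G.edgeSet) {m₁ m₂ i : ℕ}
    (hm₁ : s(u m₁, u (m₁ + 1)) ∉ F) (hm₂ : s(u m₂, u (m₂ + 1)) ∉ F) (hm₂q : m₂ ≤ q)
    (hi₁ : m₁ < i) (hi₂ : i ≤ m₂) {z : V} (hz : (fromEdgeSet F).Reachable (u i) z) :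
    ∃ j, m₁ < j ∧ j ≤ m₂ ∧ z = u j := by
  rw [reachable_iff_reflTransGen] at hz
  induction hz with
  | refl => exact ⟨i, hi₁, hi₂, rfl⟩
  | tail _ hadj ih =>
    obtain ⟨j, hj₁, hj₂, rfl⟩ := ih
    obtain ⟨hmem, -⟩ := (fromEdgeSet_adj _).mp hadj
    rcases hu.eq_or_eq_of_adj j (by omega) (by omega) _ (G.mem_edgeSet.mp (hF hmem))
      with rfl | rfl
    · refine ⟨j - 1, ?_, by omega, rfl⟩
      by_contra h
      obtain rfl : j = m₁ + 1 := by omega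
      exact hm₁ (Sym2.eq_swap ▸ hmem)
    · refine ⟨j + 1, by omega, ?_, rfl⟩
      by_contra h
      obtain rfl : j = m₂ := by omega
      exact hm₂ hmem

theorem lt_and_le_of_reachable (hu : IsBarePath G u q) (hF : F ⊆ G.edgeSet) {m₁ m₂ i j : ℕ}
    (hm₁ : s(u m₁, u (m₁ + 1)) ∉ F) (hm₂ : s(u m₂, u (m₂ + 1)) ∉ F) (hm₂q : m₂ ≤ q)
    (hi₁ : m₁ < i) (hi₂ : i ≤ m₂) (hj : j ≤ q + 1)
    (h : (fromEdgeSet F).Reachable (u i) (u j)) : m₁ < j ∧ j ≤ m₂ := by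
  obtain ⟨j', hj₁', hj₂', h⟩ := hu.exists_eq_of_reachable hF hm₁ hm₂ hm₂q hi₁ hi₂ h
  obtain rfl : j = j' := hu.injOn hj (show j' ≤ q + 1 by omega) h
  exact ⟨hj₁', hj₂'⟩

theorem not_adj_contractEdges_sdiff (hu : IsBarePath G u q) (hFE : F ⊆ G.edgeSet)
    (hcard : 2 < {m | m ≤ q ∧ s(u m, u (m + 1)) ∉ F}.ncard) {j n : ℕ}
    (hj : s(u j, u (j + 1)) ∈ F) (hj₁ : s(u (j + 1), u (j + 2)) ∉ F) (hjn : j + 1 < n)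
    (hnq : n ≤ q) (hn : s(u n, u (n + 1)) ∉ F)
    (hbetween : ∀ m, j + 1 < m → m < n → s(u m, u (m + 1)) ∈ F) :
    ¬ (contractEdges G (F \ {s(u (j + 1), u j)})).Adj
      ((fromEdgeSet (F \ {s(u (j + 1), u j)})).connectedComponentMk (u j))
      ((fromEdgeSet (F \ {s(u (j + 1), u j)})).connectedComponentMk (u (j + 2))) := by
  set F' := F \ {s(u (j + 1), u j)}
  have hF'E : F' ⊆ G.edgeSet := Set.sdiff_subset.trans hFE
  have hj' : s(u j, u (j + 1)) ∉ F' := fun h => h.2 Sym2.eq_swap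
  have hj₁' : s(u (j + 1), u (j + 1 + 1)) ∉ F' := fun h => hj₁ h.1
  have hn' : s(u n, u (n + 1)) ∉ F' := fun h => hn h.1
  have hunreach : ∀ i, j < i → i ≤ n + 1 → ¬ (fromEdgeSet F').Reachable (u i) (u j) := by
    intro i hi₁ hi₂ h
    rcases (show i = j + 1 ∨ j + 1 < i ∧ i ≤ n ∨ i = n + 1 by omega) with rfl | hi | rfl
    · have := hu.lt_and_le_of_reachable hF'E hj' hj₁' (by omega) (by omega) le_rfl (by omega) h
      omega
    · have := hu.lt_and_le_of_reachable hF'E hj₁' hn' hnq hi.1 hi.2 (by omega) h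
      omega
    · obtain ⟨m, ⟨hmq, hm⟩, hmj₁, hmn⟩ := Set.exists_mem_ne_ne_of_two_lt_ncard hcard (j + 1) n
      have hmj : m ≠ j := by rintro rfl; exact hm hj
      have hmjn : ¬ (j + 1 < m ∧ m < n) := fun h => hm (hbetween m h.1 h.2)
      rcases (show m < j ∨ n < m by omega) with hm₁ | hm₁
      · have := hu.lt_and_le_of_reachable hF'E (fun h => hm h.1) hj' (by omega) hm₁ le_rfl
          (by omega) h.symm
        omega
      · have := hu.lt_and_le_of_reachable hF'E hn' (fun h => hm h.1) hmq (by omega) hm₁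
          (by omega) h
        omega
  intro hadj
  obtain ⟨-, y, z, hyz, hy, hz⟩ := contractEdges_adj.mp hadj
  obtain ⟨i, hi₁, hi₂, rfl⟩ := hu.exists_eq_of_reachable hF'E hj₁' hn' hnq (by omega) (by omega)
    (ConnectedComponent.exact hz).symm
  have hyj := ConnectedComponent.exact hy
  rcases hu.eq_or_eq_of_adj i (by omega) (by omega) y hyz.symm with rfl | rfl
  exacts [hunreach (i - 1) (by omega) (by omega) hyj, hunreach (i + 1) (by omega) (by omega) hyj]

theorem exists_memTl_contractEdges_sdiff [Finite V] {ℓ : ℕ} (hu : IsBarePath G u q)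
    (hFE : F ⊆ G.edgeSet) (hF : MemTl (contractEdges G F) ℓ) (hcard : F.ncard + 2 ≤ q)
    {j₀ n₁ n₂ : ℕ} (hj₀ : s(u j₀, u (j₀ + 1)) ∈ F) (h₀₁ : j₀ < n₁) (h₁₂ : n₁ < n₂)
    (hn₂q : n₂ ≤ q) (hn₁ : s(u n₁, u (n₁ + 1)) ∉ F) (hn₂ : s(u n₂, u (n₂ + 1)) ∉ F) :
    ∃ f ∈ F, MemTl (contractEdges G (F \ {f})) ℓ := by
  classical
  obtain ⟨j, -, hjn₁, hj, hj₁⟩ :=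
    Nat.exists_le_lt_and_not_succ (P := fun m => s(u m, u (m + 1)) ∈ F) h₀₁.le hj₀ hn₁
  have hex : ∃ n, j + 1 < n ∧ s(u n, u (n + 1)) ∉ F := ⟨n₂, by omega, hn₂⟩
  have hn := Nat.find_spec hex
  have hnq : Nat.find hex ≤ q := (Nat.find_min' hex ⟨by omega, hn₂⟩).trans hn₂q
  have hbetween : ∀ m, j + 1 < m → m < Nat.find hex → s(u m, u (m + 1)) ∈ F :=
    fun m h₁ h₂ => by_contra fun h => Nat.find_min hex h₂ ⟨h₁, h⟩
  have hsep := hu.not_adj_contractEdges_sdiff hFE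
    (hu.two_lt_ncard_setOf_notMem (Set.toFinite F) hcard) hj hj₁ hn.1 hnq hn.2 hbetween
  exact ⟨_, Sym2.eq_swap ▸ hj, memTl_contractEdges_sdiff hFE
    (hu.eq_or_eq_of_adj (j + 1) (by omega) (by omega)) (Sym2.eq_swap ▸ hj) hj₁ hsep hF⟩

end IsBarePath

/-- Let `P = (u₀, …, u_{q+1})` be a path in `G` with `q ≥ k + 2` in which every vertex
`u_i`, `1 ≤ i ≤ q + 1`, has degree exactly `2`.  If `F ⊆ E(G)` is inclusion-wise minimal
with `G/F ∈ 𝕋_ℓ` and `|F| ≤ k`, then no edge of `F` is incident to any of `u₁, …, u_q`. -/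
theorem minimal_solution_avoids_long_degree_two_path {V : Type} [Fintype V]
    (G : SimpleGraph V) [DecidableRel G.Adj] (k ℓ q : ℕ) (hq : k + 2 ≤ q)
    (a b : V) (p : G.Walk a b) (hpath : p.IsPath) (hlen : p.length = q + 1)
    (hdeg : ∀ x ∈ p.support.tail, G.degree x = 2)
    (F : Set (Sym2 V)) (hFE : F ⊆ G.edgeSet)
    (hTl : MemTl (contractEdges G F) ℓ)
    (hmin : ∀ F' : Set (Sym2 V), F' ⊂ F → ¬ MemTl (contractEdges G F') ℓ)
    (hcard : F.ncard ≤ k) :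
    ∀ e ∈ F, ∀ x ∈ p.support.tail.dropLast, x ∉ e := by
  intro e he x hx hxe
  have hu : IsBarePath G p.getVert q :=
    hpath.isBarePath hlen fun i h₁ h₂ => hdeg _ (p.getVert_mem_support_tail h₁ (by omega))
  obtain ⟨i, hi₁, hi₂, rfl⟩ := p.exists_getVert_eq_of_mem_dropLast hx
  obtain ⟨j₀, hj₀q, hj₀⟩ := hu.exists_edge_mem hFE hi₁ (by omega) he hxe
  obtain ⟨f, hf, hfTl⟩ : ∃ f ∈ F, MemTl (contractEdges G (F \ {f})) ℓ := by
    rcases Set.exists_pair_lt_of_two_lt_ncard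
        (hu.two_lt_ncard_setOf_notMem (Set.toFinite F) (by omega)) (fun h => h.2 hj₀) with
      ⟨n₁, ⟨-, hn₁⟩, n₂, ⟨hn₂q, hn₂⟩, h₀₁, h₁₂⟩ | ⟨n₁, ⟨hn₁q, hn₁⟩, n₂, ⟨-, hn₂⟩, h₂₁, h₁₀⟩
    · exact hu.exists_memTl_contractEdges_sdiff hFE hTl (by omega) hj₀ h₀₁ h₁₂ hn₂q hn₁ hn₂
    · refine hu.reverse.exists_memTl_contractEdges_sdiff hFE hTl (by omega)
        (j₀ := q - j₀) (n₁ := q - n₁) (n₂ := q - n₂) ?_ (by omega) (by omega) (by omega) ?_ ?_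
      · rwa [sym2_reverse_sub_eq hj₀q]
      · rwa [sym2_reverse_sub_eq hn₁q]
      · rwa [sym2_reverse_sub_eq (by omega)]
  exact hmin _ (Set.sdiff_singleton_ssubset.mpr hf) hfTl
end
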